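/- arXiv:1110.3724 — 8 statements merged into one kernel-verified Lean document; each statement's English description precedes it below -/
import Mathlib

section
/- For an r-dimensional lattice simplex P with vertices v_0,...,v_r (linearly independent lattice vectors in R^m) and any nonnegative integer n, the number of lattice points in the closed parallelepiped n·◊P equals the sum over all faces F of P (including the empty face) of n^(dim F + 1) times the number of lattice points in the half-open parallelepiped Π(F). -/
/-!
Pass to coefficient vectors: the lattice points of `n • ◊P` correspond bijectively to the points
of `[0, n]^{r+1}` in the additive group `L = latticeCoeffs v` of coefficient vectors `λ` for which
`∑ λᵢ vᵢ` is integral, and `L` contains `ℤ^{r+1}`. Taking fractional parts maps these points onto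
`L ∩ [0, 1)^{r+1}`, the coefficient vectors of the lattice points of `Π(P)`. The fibre over `μ`
consists of the `μ + a` with `a ∈ ℕ^{r+1}`, where `aᵢ` has `n + 1` choices if `μᵢ = 0` and `n`
otherwise, so it has `∏ᵢ (n + [μᵢ = 0]) = ∑_{F ⊇ supp μ} n^{|F|}` points. Summing over `μ` and
exchanging the two sums gives the formula.
-/

open Finset

theorem prod_add_boole_eq_sum {ι R : Type*} [Fintype ι] [DecidableEq ι] [CommSemiring R]
    (p : ι → Prop) [DecidablePred p] (a : R) :
    ∏ i, (a + if p i then 1 else 0) = ∑ F : Finset ι, if ∀ i ∉ F, p i then a ^ #F else 0 := by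
  rw [prod_add, ← powerset_univ]
  refine sum_congr rfl fun F _ => ?_
  simp only [prod_const, prod_boole, mem_sdiff, mem_univ, true_and, mul_boole]

theorem AddSubgroup.fract_comp_mem_iff {ι K : Type*} [Ring K] [LinearOrder K] [FloorRing K]
    (L : AddSubgroup (ι → K)) (hZ : ∀ z : ι → ℤ, (fun i => (z i : K)) ∈ L) {x : ι → K} :
    Int.fract ∘ x ∈ L ↔ x ∈ L := by
  have hx : Int.fract ∘ x + (fun i => (⌊x i⌋ : K)) = x := funext fun i => Int.fract_add_floor (x i)
  rw [← add_mem_cancel_right (hZ fun i => ⌊x i⌋), hx]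

section FloorRing

variable {K : Type*} [CommRing K] [LinearOrder K] [IsStrictOrderedRing K] [FloorRing K]

theorem mem_Icc_and_fract_eq_iff {c t : K} (hc : c ∈ Set.Ico 0 1) (n : ℕ) :
    t ∈ Set.Icc 0 (n : K) ∧ Int.fract t = c ↔
      ∃ k < n + if c = 0 then 1 else 0, (k : K) + c = t := by
  obtain ⟨hc0, hc1⟩ := hc
  constructor
  · rintro ⟨⟨ht0, htn⟩, hfr⟩
    obtain ⟨-, -, z, hz⟩ := Int.fract_eq_iff.mp hfr
    have hz0 : 0 ≤ z := by
      have : ((-1 : ℤ) : K) < z := by push_cast; linarith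
      have : (-1 : ℤ) < z := by exact_mod_cast this
      omega
    lift z to ℕ using hz0
    push_cast at hz
    refine ⟨z, ?_, by linarith⟩
    split_ifs with h0
    · have : (z : K) ≤ n := by linarith
      exact Nat.lt_succ_of_le (by exact_mod_cast this)
    · have : (z : K) < n := by linarith [lt_of_le_of_ne hc0 (Ne.symm h0)]
      simpa using (by exact_mod_cast this : z < n)
  · rintro ⟨k, hk, rfl⟩
    refine ⟨⟨by positivity, ?_⟩, ?_⟩
    · split_ifs at hk with h0
      · have : (k : K) ≤ n := by exact_mod_cast Nat.lt_succ_iff.mp hk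
        linarith
      · have : (k : K) + 1 ≤ n := by exact_mod_cast hk
        linarith
    · rw [Int.fract_natCast_add, Int.fract_eq_self.mpr ⟨hc0, hc1⟩]

variable {ι : Type*} [Fintype ι] [DecidableEq ι] (L : AddSubgroup (ι → K))

theorem boxFiber_eq_image (hZ : ∀ z : ι → ℤ, (fun i => (z i : K)) ∈ L) {μ : ι → K} (hμL : μ ∈ L)
    (hμ : ∀ i, μ i ∈ Set.Ico 0 1) (n : ℕ) :
    {x | x ∈ L ∧ (∀ i, x i ∈ Set.Icc 0 (n : K)) ∧ Int.fract ∘ x = μ} =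
      (fun (a : ι → ℕ) i => (a i : K) + μ i) ''
        Fintype.piFinset fun i => range (n + if μ i = 0 then 1 else 0) := by
  ext x
  simp only [Set.mem_ofPred_eq, Set.mem_image, Fintype.coe_piFinset, Set.mem_pi, Set.mem_univ,
    forall_const, coe_range, Set.mem_Iio, funext_iff]
  calc (x ∈ L ∧ (∀ i, x i ∈ Set.Icc 0 (n : K)) ∧ ∀ i, (Int.fract ∘ x) i = μ i)
      ↔ ∀ i, x i ∈ Set.Icc 0 (n : K) ∧ Int.fract (x i) = μ i := by
        rw [← L.fract_comp_mem_iff hZ]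
        constructor
        · exact fun ⟨_, hI, hf⟩ i => ⟨hI i, hf i⟩
        · intro h
          have hxμ : Int.fract ∘ x = μ := funext fun i => (h i).2
          exact ⟨hxμ ▸ hμL, fun i => (h i).1, fun i => (h i).2⟩
    _ ↔ ∀ i, ∃ k < n + if μ i = 0 then 1 else 0, (k : K) + μ i = x i := by
        simp only [mem_Icc_and_fract_eq_iff (hμ _)]
    _ ↔ _ := by
        constructor
        · intro h
          choose a ha hax using h
          exact ⟨a, ha, hax⟩
        · rintro ⟨a, ha, hax⟩ i
          exact ⟨a i, ha i, hax i⟩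

theorem ncard_boxFiber (hZ : ∀ z : ι → ℤ, (fun i => (z i : K)) ∈ L) {μ : ι → K} (hμL : μ ∈ L)
    (hμ : ∀ i, μ i ∈ Set.Ico 0 1) (n : ℕ) :
    {x | x ∈ L ∧ (∀ i, x i ∈ Set.Icc 0 (n : K)) ∧ Int.fract ∘ x = μ}.ncard =
      ∏ i, (n + if μ i = 0 then 1 else 0) := by
  have hinj : Function.Injective fun (a : ι → ℕ) i => (a i : K) + μ i :=
    fun a b h => funext fun i => by simpa using congrFun h i
  rw [boxFiber_eq_image L hZ hμL hμ n, Set.ncard_image_of_injective _ hinj, Set.ncard_coe_finset,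
    Fintype.card_piFinset]
  simp only [card_range]

theorem ncard_box_eq_sum_ncard_halfOpenBox (hZ : ∀ z : ι → ℤ, (fun i => (z i : K)) ∈ L)
    (hfin : {μ | μ ∈ L ∧ ∀ i, μ i ∈ Set.Ico 0 1}.Finite) (n : ℕ) :
    {x | x ∈ L ∧ ∀ i, x i ∈ Set.Icc 0 (n : K)}.ncard =
      ∑ F : Finset ι, n ^ #F * {μ | μ ∈ L ∧ (∀ i, μ i ∈ Set.Ico 0 1) ∧ ∀ i ∉ F, μ i = 0}.ncard := by
  set fiber := fun μ : ι → K => {x | x ∈ L ∧ (∀ i, x i ∈ Set.Icc 0 (n : K)) ∧ Int.fract ∘ x = μ}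
  have hunion : {x | x ∈ L ∧ ∀ i, x i ∈ Set.Icc 0 (n : K)} =
      ⋃ μ ∈ {μ | μ ∈ L ∧ ∀ i, μ i ∈ Set.Ico 0 1}, fiber μ := by
    ext x
    simp only [Set.mem_ofPred_eq, Set.mem_iUnion, exists_prop, fiber]
    constructor
    · rintro ⟨hxL, hx⟩
      exact ⟨Int.fract ∘ x, ⟨(L.fract_comp_mem_iff hZ).mpr hxL,
        fun i => ⟨Int.fract_nonneg _, Int.fract_lt_one _⟩⟩, hxL, hx, rfl⟩
    · rintro ⟨μ, -, hxL, hx, -⟩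
      exact ⟨hxL, hx⟩
  have hdisj : Set.PairwiseDisjoint {μ | μ ∈ L ∧ ∀ i, μ i ∈ Set.Ico 0 1} fiber :=
    fun μ _ μ' _ hne => Set.disjoint_left.mpr fun x hx hx' => hne (hx.2.2.symm.trans hx'.2.2)
  have hfinite : ∀ μ ∈ {μ | μ ∈ L ∧ ∀ i, μ i ∈ Set.Ico 0 1}, (fiber μ).Finite := fun μ hμ => by
    simp only [fiber, boxFiber_eq_image L hZ hμ.1 hμ.2 n]
    exact (finite_toSet _).image _
  have hfiber : ∀ μ ∈ hfin.toFinset, (fiber μ).ncard =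
      ∑ F : Finset ι, if ∀ i ∉ F, μ i = 0 then n ^ #F else 0 := by
    intro μ hμ
    rw [Set.Finite.mem_toFinset] at hμ
    exact (ncard_boxFiber L hZ hμ.1 hμ.2 n).trans (prod_add_boole_eq_sum _ _)
  have hfilter : ∀ F : Finset ι, {μ | μ ∈ L ∧ (∀ i, μ i ∈ Set.Ico 0 1) ∧ ∀ i ∉ F, μ i = 0}.ncard =
      #{μ ∈ hfin.toFinset | ∀ i ∉ F, μ i = 0} := by
    intro F
    rw [← Set.ncard_coe_finset, coe_filter]
    simp only [Set.Finite.mem_toFinset, Set.mem_ofPred_eq, and_assoc]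
  rw [hunion, hfin.ncard_biUnion hfinite hdisj, finsum_mem_eq_finite_toFinset_sum _ hfin,
    sum_congr rfl hfiber, sum_comm]
  refine sum_congr rfl fun F _ => ?_
  rw [hfilter, card_filter, mul_sum]
  simp only [mul_boole]

end FloorRing

section LatticeCoefficients

variable {ι κ : Type*} [Fintype ι] (w : ι → κ → ℤ)

def latticeCoeffs : AddSubgroup (ι → ℝ) where
  carrier := {c | ∀ j, ∃ z : ℤ, (z : ℝ) = ∑ i, c i * w i j}
  zero_mem' j := ⟨0, by simp⟩
  add_mem' {a b} ha hb j := by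
    obtain ⟨za, hza⟩ := ha j
    obtain ⟨zb, hzb⟩ := hb j
    exact ⟨za + zb, by simp only [Int.cast_add, hza, hzb, Pi.add_apply, add_mul, sum_add_distrib]⟩
  neg_mem' {a} ha j := by
    obtain ⟨z, hz⟩ := ha j
    exact ⟨-z, by simp only [Int.cast_neg, hz, Pi.neg_apply, neg_mul, sum_neg_distrib]⟩

theorem intCast_mem_latticeCoeffs (z : ι → ℤ) : (fun i => (z i : ℝ)) ∈ latticeCoeffs w :=
  fun j => ⟨∑ i, z i * w i j, by push_cast; rfl⟩

theorem linearCombination_intCast_apply (c : ι → ℝ) (j : κ) :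
    Fintype.linearCombination ℝ (fun i j => (w i j : ℝ)) c j = ∑ i, c i * w i j := by
  simp [Fintype.linearCombination_apply, Finset.sum_apply]

variable {w}

theorem ncard_latticePoints_eq (hw : LinearIndependent ℝ fun i j => (w i j : ℝ))
    (P : (ι → ℝ) → Prop) :
    {x : κ → ℤ | ∃ c, P c ∧ ∀ j, (x j : ℝ) = ∑ i, c i * w i j}.ncard =
      {c | c ∈ latticeCoeffs w ∧ P c}.ncard := by
  have hcast : Function.Injective fun (x : κ → ℤ) j => (x j : ℝ) :=
    fun x y h => funext fun j => Int.cast_injective (congrFun h j)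
  rw [← Set.ncard_image_of_injective _ hcast,
    ← Set.ncard_image_of_injective _ hw.fintypeLinearCombination_injective]
  congr 1
  ext y
  simp only [Set.mem_image, Set.mem_ofPred_eq, funext_iff, linearCombination_intCast_apply]
  constructor
  · rintro ⟨x, ⟨c, hc, hx⟩, hxy⟩
    exact ⟨c, ⟨fun j => ⟨x j, hx j⟩, hc⟩, fun j => (hx j).symm.trans (hxy j)⟩
  · rintro ⟨c, ⟨hL, hc⟩, hcy⟩
    choose x hx using hL
    exact ⟨x, ⟨c, hc, hx⟩, fun j => (hx j).trans (hcy j)⟩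

theorem finite_inter_latticeCoeffs [Fintype κ] (hw : LinearIndependent ℝ fun i j => (w i j : ℝ))
    {s : Set (ι → ℝ)} (hs : Bornology.IsBounded s) : (s ∩ latticeCoeffs w).Finite := by
  set f := Fintype.linearCombination ℝ (fun i j => (w i j : ℝ))
  refine Set.Finite.of_finite_image ?_ hw.fintypeLinearCombination_injective.injOn
  refine (ZSpan.setFinite_inter (Pi.basisFun ℝ κ)
    ((LinearMap.toContinuousLinearMap f).lipschitz.isBounded_image hs)).subset ?_
  rintro _ ⟨c, ⟨hcs, hcL⟩, rfl⟩
  refine ⟨⟨c, hcs, rfl⟩, ?_⟩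
  rw [SetLike.mem_coe, Module.Basis.mem_span_iff_repr_mem]
  intro j
  obtain ⟨z, hz⟩ := hcL j
  exact ⟨z, by simp [Pi.basisFun_repr, linearCombination_intCast_apply, hz]⟩

end LatticeCoefficients

/-- For an `r`-dimensional lattice simplex `P = ⟨v_0,…,v_r⟩` spanned by
linearly independent lattice vectors in `ℝ^m` and every `n ≥ 0`, the number
of lattice points in the closed parallelepiped `n·◊P` equals the sum, over
all faces `F` of `P` (including the empty face, encoded as subsets
`F ⊆ {0,…,r}`), of `n^{dim F + 1}` times the number of lattice points in the
half-open parallelepiped `Π(F)`. -/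
theorem lattice_points_dilated_parallelepiped (m r : ℕ)
    (v : Fin (r + 1) → Fin m → ℤ)
    (hv : LinearIndependent ℝ (fun i => fun j => (v i j : ℝ))) (n : ℕ) :
    Set.ncard {x : Fin m → ℤ | ∃ lam : Fin (r + 1) → ℝ,
        (∀ i, 0 ≤ lam i ∧ lam i ≤ (n : ℝ)) ∧
        ∀ j, (x j : ℝ) = ∑ i, lam i * (v i j : ℝ)}
      = ∑ F : Finset (Fin (r + 1)), n ^ F.card *
          Set.ncard {x : Fin m → ℤ | ∃ lam : Fin (r + 1) → ℝ,
            (∀ i, 0 ≤ lam i ∧ lam i < 1) ∧ (∀ i ∉ F, lam i = 0) ∧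
            ∀ j, (x j : ℝ) = ∑ i, lam i * (v i j : ℝ)} := by
  have hfin : {μ | μ ∈ latticeCoeffs v ∧ ∀ i, μ i ∈ Set.Ico 0 1}.Finite :=
    (finite_inter_latticeCoeffs hv (Metric.isBounded_Icc 0 1)).subset
      fun μ ⟨hμL, hμ⟩ => ⟨⟨fun i => (hμ i).1, fun i => (hμ i).2.le⟩, hμL⟩
  simp only [← and_assoc]
  simp only [ncard_latticePoints_eq hv]
  exact ncard_box_eq_sum_ncard_halfOpenBox _ (intCast_mem_latticeCoeffs v) hfin n
end

section
/- For integers i ≥ j ≥ -1, the two expressions A(i,j,t) = (1-t)^{i+2} Σ_{n≥0} t^n n^{j+1}(n+1)^{i-j} and Σ_{k=0}^{i-j} t(1-t)^{i-j-k} C(i-j, k) Eul(j+k, t) are equal as formal power series (hence both are polynomials in t). -/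
/-- The Eulerian polynomial of degree `n`. -/
noncomputable def Eul (n : ℕ) : Polynomial ℤ :=
  ∑ i ∈ Finset.range (n + 1),
    Polynomial.C (∑ j ∈ Finset.range (i + 1),
      (-1) ^ j * (Nat.choose (n + 2) j : ℤ) * ((i : ℤ) + 1 - (j : ℤ)) ^ (n + 1)) *
    Polynomial.X ^ i

/-- The Eulerian polynomial as a Laurent series, with the paper's convention
`Eul(-1,t) = 1/t`. -/
noncomputable def EulL (n : ℤ) : LaurentSeries ℤ :=
  if 0 ≤ n then ((Eul n.toNat : PowerSeries ℤ) : LaurentSeries ℤ)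
  else HahnSeries.single (-1 : ℤ) (1 : ℤ)

/-!
Expanding `(n + 1) ^ (i - j)` binomially writes `A(i,j,t)` as
`∑ₖ C(i-j,k) (1-t)^(i-j-k) · W(j+1+k)` with `W r = (1-t)^(r+1) ∑ₙ nʳ tⁿ`.
Comparing coefficients, `W (r + 1) = t · Eul(r,t)`: in low degree the coefficients are the
defining alternating sums of `Eul`, and in degree above `r + 1` they are `(r+2)`-th finite
differences of `x ↦ x ^ (r+1)`, hence vanish. Finally `W 0 = (1-t) ∑ tⁿ = 1`, which is
`t · Eul(-1,t)` with the convention `Eul(-1,t) = 1/t`.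
-/

open Finset PowerSeries

section CommRing

variable {R : Type*} [CommRing R]

-- The sum is the `s`-th forward difference of `x ↦ x ^ d` at `x - s`, read backwards.
theorem sum_range_alternating_choose_mul_pow_eq_zero {d s : ℕ} (h : d < s) (x : R) :
    ∑ j ∈ range (s + 1), (-1) ^ j * (s.choose j : R) * (x - j) ^ d = 0 := by
  have hΔ := congr_fun (fwdDiff_iter_pow_eq_zero_of_lt (R := R) h) (x - s)
  rw [fwdDiff_iter_eq_sum_shift, ← sum_range_reflect, Pi.zero_apply] at hΔ
  rw [← hΔ]
  refine sum_congr rfl fun j hj => ?_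
  have hjs : j ≤ s := Nat.lt_succ_iff.mp (mem_range.mp hj)
  rw [Nat.add_sub_cancel, Nat.sub_sub_self hjs, Nat.choose_symm hjs, zsmul_eq_mul, nsmul_one,
    Nat.cast_sub hjs]
  push_cast
  ring_nf

theorem coeff_one_sub_X_pow (s k : ℕ) :
    coeff k ((1 - X : R⟦X⟧) ^ s) = (-1) ^ k * s.choose k := by
  have hterm (m : ℕ) : (-X : R⟦X⟧) ^ m * 1 ^ (s - m) * (s.choose m : R⟦X⟧)
      = C ((-1 : R) ^ m * s.choose m) * X ^ m := by
    simp only [map_mul, map_pow, map_neg, map_one, map_natCast]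
    ring
  rw [sub_eq_add_neg, add_comm, add_pow, map_sum]
  simp only [hterm, coeff_C_mul_X_pow]
  simp +contextual [Nat.choose_eq_zero_of_lt]

theorem coeff_one_sub_X_pow_mul_mk (s N : ℕ) (f : ℕ → R) :
    coeff N ((1 - X : R⟦X⟧) ^ s * mk f)
      = ∑ j ∈ range (N + 1), (-1) ^ j * (s.choose j : R) * f (N - j) := by
  simp [coeff_mul, Nat.sum_antidiagonal_eq_sum_range_succ_mk, coeff_one_sub_X_pow]

theorem one_sub_X_pow_mul_mk_pow_mul_add_one_pow (e m : ℕ) :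
    (1 - X : R⟦X⟧) ^ (e + m + 1) * mk (fun n : ℕ => (n : R) ^ e * (n + 1) ^ m)
      = ∑ k ∈ range (m + 1), (1 - X : R⟦X⟧) ^ (m - k) * (m.choose k : R⟦X⟧) *
          ((1 - X : R⟦X⟧) ^ (e + k + 1) * mk (fun n : ℕ => (n : R) ^ (e + k))) := by
  have hmk : mk (fun n : ℕ => (n : R) ^ e * (n + 1) ^ m)
      = ∑ k ∈ range (m + 1), (m.choose k : R⟦X⟧) * mk (fun n : ℕ => (n : R) ^ (e + k)) := by
    ext N
    simp only [map_sum, coeff_mk, ← map_natCast (C (R := R)), coeff_C_mul]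
    rw [add_pow, mul_sum]
    refine sum_congr rfl fun k _ => ?_
    rw [one_pow, mul_one, pow_add]
    ring
  rw [hmk, mul_sum]
  refine sum_congr rfl fun k hk => ?_
  rw [show e + m + 1 = (m - k) + (e + k + 1) by have := mem_range.mp hk; omega, pow_add]
  ring

end CommRing

theorem Eul_coeff (n N : ℕ) :
    (Eul n).coeff N = if N ≤ n then ∑ j ∈ range (N + 1),
        (-1) ^ j * ((n + 2).choose j : ℤ) * ((N : ℤ) + 1 - j) ^ (n + 1) else 0 := by
  simp only [Eul, Polynomial.finsetSum_coeff, Polynomial.coeff_C_mul_X_pow]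
  simp

theorem one_sub_X_pow_mul_mk_pow_eq_X_mul_Eul (n : ℕ) :
    (1 - X : ℤ⟦X⟧) ^ (n + 2) * mk (fun m : ℕ => (m : ℤ) ^ (n + 1)) = X * (Eul n : ℤ⟦X⟧) := by
  ext N
  cases N with
  | zero => simp
  | succ M =>
    rw [coeff_succ_X_mul, Polynomial.coeff_coe, Eul_coeff, coeff_one_sub_X_pow_mul_mk]
    have hcast : ∀ j ∈ range (M + 1 + 1),
        (-1) ^ j * ((n + 2).choose j : ℤ) * ((M + 1 - j : ℕ) : ℤ) ^ (n + 1)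
          = (-1) ^ j * ((n + 2).choose j : ℤ) * ((M : ℤ) + 1 - j) ^ (n + 1) := fun j hj => by
      rw [Nat.cast_sub (Nat.lt_succ_iff.mp (mem_range.mp hj))]
      push_cast
      ring
    rw [sum_congr rfl hcast]
    split_ifs with hMn
    · simp [sum_range_succ]
    · have hchoose : ∀ j ∈ range (M + 1 + 1), j ∉ range (n + 2 + 1) →
          (-1) ^ j * ((n + 2).choose j : ℤ) * ((M : ℤ) + 1 - j) ^ (n + 1) = 0 := fun j _ hj => by
        rw [Nat.choose_eq_zero_of_lt (by simpa using hj), Nat.cast_zero, mul_zero, zero_mul]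
      rw [← sum_subset (range_subset_range.2 (by omega)) hchoose]
      exact sum_range_alternating_choose_mul_pow_eq_zero (by omega) _

theorem ofPowerSeries_one_sub_X_pow_mul_mk_pow (r : ℕ) :
    (((1 - X : ℤ⟦X⟧) ^ (r + 1) * mk (fun n : ℕ => (n : ℤ) ^ r) : ℤ⟦X⟧) : LaurentSeries ℤ)
      = (X : ℤ⟦X⟧) * EulL (r - 1) := by
  cases r with
  | zero =>
    simp only [zero_add, pow_one, pow_zero, EulL, HahnSeries.ofPowerSeries_X]
    rw [mul_comm, ← Pi.one_def, mk_one_mul_one_sub_eq_one]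
    simp
  | succ r =>
    rw [one_sub_X_pow_mul_mk_pow_eq_X_mul_Eul, EulL, if_pos (by omega)]
    simp

/-- For integers `i ≥ j ≥ -1`, the two expressions
`A(i,j,t) = (1-t)^{i+2} ∑_{n≥0} t^n n^{j+1} (n+1)^{i-j}` and
`∑_{k=0}^{i-j} t (1-t)^{i-j-k} C(i-j,k) Eul(j+k,t)` are equal. -/
theorem A_two_expressions (i j : ℤ) (hj : -1 ≤ j) (hij : j ≤ i) :
    (((1 - PowerSeries.X) ^ (i + 2).toNat *
        PowerSeries.mk (fun n : ℕ =>
          (n : ℤ) ^ (j + 1).toNat * ((n : ℤ) + 1) ^ (i - j).toNat) :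
        PowerSeries ℤ) : LaurentSeries ℤ)
      = ∑ k ∈ Finset.range ((i - j).toNat + 1),
          ((PowerSeries.X : PowerSeries ℤ) : LaurentSeries ℤ) *
            (((1 - PowerSeries.X) ^ ((i - j).toNat - k) : PowerSeries ℤ) : LaurentSeries ℤ) *
            (Nat.choose (i - j).toNat k : LaurentSeries ℤ) *
            EulL (j + k) := by
  obtain ⟨e, rfl⟩ : ∃ e : ℕ, j = e - 1 := ⟨(j + 1).toNat, by omega⟩
  obtain ⟨m, rfl⟩ : ∃ m : ℕ, i = e - 1 + m := ⟨(i - (e - 1)).toNat, by omega⟩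
  rw [show (e - 1 + m + 2 : ℤ).toNat = e + m + 1 by omega,
    show (e - 1 + 1 : ℤ).toNat = e by omega, show (e - 1 + m - (e - 1) : ℤ).toNat = m by omega,
    one_sub_X_pow_mul_mk_pow_mul_add_one_pow, map_sum]
  refine sum_congr rfl fun k _ => ?_
  rw [map_mul, map_mul, map_natCast, ofPowerSeries_one_sub_X_pow_mul_mk_pow,
    show ((e + k : ℕ) : ℤ) - 1 = e - 1 + k by push_cast; ring]
  ring
end

section
/- For integers 0 ≤ j < i with 2j + 1 ≥ i, the polynomial A(i,j,t) equals 2^{i-j} · t · δ(Δ^{i-j} × ℓ^{2j+1-i}, t), where δ denotes the delta (h*) polynomial. Equivalently, (1-t)^{i+2} Σ_{n≥0} t^n n^{j+1}(n+1)^{i-j} = 2^{i-j} t (1-t)^{i+2} Σ_{m≥0} t^m ((m+1)(m+2)/2)^{i-j} (m+1)^{2j+1-i}. -/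
/-- For integers `0 ≤ j < i` with `2j+1 ≥ i`,
`A(i,j,t) = 2^{i-j} · t · δ(Δ^{i-j} × ℓ^{2j+1-i}, t)`, i.e.
`(1-t)^{i+2} ∑_{n≥0} t^n n^{j+1}(n+1)^{i-j}
  = 2^{i-j} t (1-t)^{i+2} ∑_{m≥0} t^m ((m+1)(m+2)/2)^{i-j} (m+1)^{2j+1-i}`. -/
theorem A_eq_delta_simplex_cube (i j : ℕ) (hji : j < i) (h2 : i ≤ 2 * j + 1) :
    ((1 - PowerSeries.X) ^ (i + 2) *
        PowerSeries.mk (fun n : ℕ => (n : ℤ) ^ (j + 1) * ((n : ℤ) + 1) ^ (i - j)) :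
        PowerSeries ℤ)
      = ((2 : ℤ) ^ (i - j) : ℤ) • (PowerSeries.X *
          ((1 - PowerSeries.X) ^ (i + 2) *
            PowerSeries.mk (fun m : ℕ =>
              ((((m : ℤ) + 1) * ((m : ℤ) + 2)) / 2) ^ (i - j) *
                ((m : ℤ) + 1) ^ (2 * j + 1 - i)))) := by
  have key : (PowerSeries.mk (fun n : ℕ => (n : ℤ) ^ (j + 1) * ((n : ℤ) + 1) ^ (i - j)) :
      PowerSeries ℤ)
      = ((2 : ℤ) ^ (i - j) : ℤ) • (PowerSeries.X *
          PowerSeries.mk (fun m : ℕ =>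
              ((((m : ℤ) + 1) * ((m : ℤ) + 2)) / 2) ^ (i - j) *
                ((m : ℤ) + 1) ^ (2 * j + 1 - i))) := by
    ext n
    rw [PowerSeries.coeff_mk, map_smul]
    cases n with
    | zero =>
      simp [PowerSeries.coeff_zero_eq_constantCoeff, Nat.succ_le_of_lt]
    | succ m =>
      rw [PowerSeries.coeff_succ_X_mul, PowerSeries.coeff_mk]
      have hdvd : (2 : ℤ) ∣ ((m : ℤ) + 1) * ((m : ℤ) + 2) := by
        rcases Int.even_or_odd (m : ℤ) with ⟨k, hk⟩ | ⟨k, hk⟩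
        · exact ⟨((m : ℤ) + 1) * (k + 1), by rw [hk]; ring⟩
        · exact ⟨(k + 1) * ((m : ℤ) + 2), by rw [hk]; ring⟩
      obtain ⟨q, hq⟩ := hdvd
      have hq2 : ((m : ℤ) + 1) * ((m : ℤ) + 2) / 2 = q := by omega
      have hexp : (i - j) + (2 * j + 1 - i) = j + 1 := by omega
      rw [hq2, smul_eq_mul, ← mul_assoc, ← mul_pow, ← hq]
      push_cast
      rw [mul_pow, show ((m : ℤ) + 2) = ((m : ℤ) + 1) + 1 by ring, mul_right_comm,
        ← pow_add, hexp]
  calc ((1 - PowerSeries.X) ^ (i + 2) *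
        PowerSeries.mk (fun n : ℕ => (n : ℤ) ^ (j + 1) * ((n : ℤ) + 1) ^ (i - j)) :
        PowerSeries ℤ)
      = (1 - PowerSeries.X) ^ (i + 2) *
          (((2 : ℤ) ^ (i - j) : ℤ) • (PowerSeries.X *
            PowerSeries.mk (fun m : ℕ =>
              ((((m : ℤ) + 1) * ((m : ℤ) + 2)) / 2) ^ (i - j) *
                ((m : ℤ) + 1) ^ (2 * j + 1 - i)))) := by rw [key]
    _ = _ := by rw [mul_smul_comm]; congr 1; ring
end

section
/- Let d ≥ 1 and s < d be integers and let (h_0,...,h_s) be a sequence of nonnegative integers (the δ-vector of a d-dimensional lattice polytope of degree s). Define δ_i = (i+1)h_i + (d+1-i)h_{i-1}. If h_0 ≤ h_1 ≤ ... ≤ h_{⌊(s+1)/2⌋} and h_i ≤ h_{s-i} for all 0 ≤ i ≤ ⌊s/2⌋, then with s' = s+1: δ_i ≤ δ_{s'-i} for 0 ≤ i ≤ ⌊s'/2⌋ and δ_0 ≤ δ_1 ≤ ... ≤ δ_{⌊(s'+1)/2⌋}. -/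
/-- Combinatorial preservation of the lower half of the alternatingly
increasing conditions under taking the product with `ℓ`.  Here
`(h_0,…,h_s)` is the δ-vector of a `d`-dimensional lattice polytope of degree
`s < d`, and `δ_i = (i+1)h_i + (d+1-i)h_{i-1}` is the δ-vector of `P × ℓ`. -/
theorem product_preserves_lower_conditions (d s : ℕ) (hd : 1 ≤ d) (hs : s < d)
    (h : ℕ → ℤ) (hpos : ∀ i, 0 ≤ h i) (hzero : ∀ j, s < j → h j = 0)
    (hchain : ∀ i, i < (s + 1) / 2 → h i ≤ h (i + 1))
    (hsym : ∀ i, i ≤ s / 2 → h i ≤ h (s - i)) :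
    ∀ δ : ℕ → ℤ,
      (∀ c : ℕ,
        δ c = ((c : ℤ) + 1) * h c +
          ((d : ℤ) + 1 - (c : ℤ)) * (if c = 0 then 0 else h (c - 1))) →
      (∀ i, i ≤ (s + 1) / 2 → δ i ≤ δ (s + 1 - i)) ∧
      (∀ i, i < (s + 2) / 2 → δ i ≤ δ (i + 1)) := by
  intro δ hδ
  constructor
  · intro i hi
    rcases Nat.eq_zero_or_pos i with rfl | hi1
    · -- i = 0
      have e0 : δ 0 = h 0 := by
        have := hδ 0; simp at this; linarith [this]
      have e1 : δ (s + 1 - 0) = ((s : ℤ) + 2) * h (s + 1) + ((d : ℤ) - s) * h s := by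
        have := hδ (s + 1)
        simp only [Nat.sub_zero, Nat.succ_ne_zero, if_false] at this ⊢
        have hc : ((s + 1 : ℕ) : ℤ) = (s : ℤ) + 1 := by push_cast; ring
        rw [this]; push_cast; ring
      have hz : h (s + 1) = 0 := hzero (s + 1) (by omega)
      have hsy : h 0 ≤ h s := by
        have := hsym 0 (by omega); simpa using this
      have hps : 0 ≤ h s := hpos s
      rw [e0, e1, hz]
      have hds : (1 : ℤ) ≤ (d : ℤ) - s := by
        omega
      nlinarith [mul_le_mul_of_nonneg_left hps (show (0:ℤ) ≤ (d:ℤ) - s - 1 by linarith)]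
    · -- i ≥ 1
      rcases Nat.lt_or_ge (2 * i) (s + 1) with h2i | h2i
      · -- 2i ≤ s
        have h2is : 2 * i ≤ s := by omega
        have his : i ≤ s := by omega
        have e1 : δ i = ((i : ℤ) + 1) * h i + ((d : ℤ) + 1 - i) * h (i - 1) := by
          rw [hδ i, if_neg (by omega)]
        have e2 : δ (s + 1 - i) = ((s : ℤ) + 2 - i) * h (s + 1 - i)
            + ((d : ℤ) - s + i) * h (s - i) := by
          rw [hδ (s + 1 - i), if_neg (by omega)]
          have hc : ((s + 1 - i : ℕ) : ℤ) = (s : ℤ) + 1 - i := by omega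
          have hc2 : s + 1 - i - 1 = s - i := by omega
          rw [hc, hc2]; ring
        -- key inequalities
        have A : h i ≤ h (s - i) := hsym i (by omega)
        have B : h (i - 1) ≤ h (s + 1 - i) := by
          have := hsym (i - 1) (by omega)
          have hc : s - (i - 1) = s + 1 - i := by omega
          rwa [hc] at this
        have C0 : h (i - 1) ≤ h i := by
          have := hchain (i - 1) (by omega)
          have hc : i - 1 + 1 = i := by omega
          rwa [hc] at this
        have C : h (i - 1) ≤ h (s - i) := le_trans C0 A
        have hds : (1 : ℤ) ≤ (d : ℤ) - s := by
          omega
        have hsi : (i : ℤ) ≤ s := by exact_mod_cast his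
        rw [e1, e2]
        nlinarith [mul_le_mul_of_nonneg_left A (show (0:ℤ) ≤ (i:ℤ) + 1 by positivity),
          mul_le_mul_of_nonneg_left B (show (0:ℤ) ≤ (s:ℤ) + 2 - i by linarith),
          mul_le_mul_of_nonneg_left C (show (0:ℤ) ≤ (d:ℤ) - s - 1 by linarith)]
      · -- 2i = s + 1 (s odd, middle)
        have h2e : 2 * i = s + 1 := by
          have : i ≤ (s + 1) / 2 := hi; omega
        have hc : s + 1 - i = i := by omega
        rw [hc]
  · intro i hi
    have h2is : 2 * i ≤ s := by omega
    rcases Nat.eq_zero_or_pos i with rfl | hi1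
    · -- i = 0
      have e0 : δ 0 = h 0 := by
        have := hδ 0; simp at this; linarith [this]
      have e1 : δ 1 = 2 * h 1 + (d : ℤ) * h 0 := by
        rw [hδ 1, if_neg (by omega)]; push_cast; ring
      rw [e0, e1]
      have hd1 : (1 : ℤ) ≤ (d : ℤ) := by exact_mod_cast hd
      nlinarith [hpos 0, hpos 1, mul_le_mul_of_nonneg_left (hpos 0) (show (0:ℤ) ≤ (d:ℤ) - 1 by linarith)]
    · -- i ≥ 1
      have e1 : δ i = ((i : ℤ) + 1) * h i + ((d : ℤ) + 1 - i) * h (i - 1) := by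
        rw [hδ i, if_neg (by omega)]
      have e2 : δ (i + 1) = ((i : ℤ) + 2) * h (i + 1) + ((d : ℤ) - i) * h i := by
        rw [hδ (i + 1), if_neg (by omega)]
        simp only [Nat.add_sub_cancel]; push_cast; ring
      have C1 : h (i - 1) ≤ h i := by
        have := hchain (i - 1) (by omega)
        have hc : i - 1 + 1 = i := by omega
        rwa [hc] at this
      have C2 : h (i - 1) ≤ h (i + 1) := by
        rcases Nat.lt_or_ge (2 * i + 1) (s + 1) with hcase | hcase
        · exact le_trans C1 (hchain i (by omega))
        · -- 2i = s
          have h2e : 2 * i = s := by omega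
          have := hsym (i - 1) (by omega)
          have hc : s - (i - 1) = i + 1 := by omega
          rwa [hc] at this
      have hdi : (2 * (i : ℤ) + 1) ≤ (d : ℤ) := by
        have : 2 * i + 1 ≤ d := by omega
        exact_mod_cast this
      rw [e1, e2]
      nlinarith [mul_le_mul_of_nonneg_left C2 (show (0:ℤ) ≤ (i:ℤ) + 2 by positivity),
        mul_le_mul_of_nonneg_left C1 (show (0:ℤ) ≤ (d:ℤ) - 1 - 2 * i by linarith)]
end

section
/- Let d ≥ 1, and s with d-2 ≤ s < d, and let (h_0,...,h_s) be nonnegative integers with h_{s+1-i} ≤ h_i for 1 ≤ i ≤ ⌊(s+1)/2⌋ and h_{⌊(s+1)/2⌋} ≥ ... ≥ h_s. Define δ_i = (i+1)h_i + (d+1-i)h_{i-1} (with h_{-1} = 0, h_j = 0 for j > s). Then with s' = s+1: δ_{s'+1-i} ≤ δ_i for 1 ≤ i ≤ ⌊(s'+1)/2⌋ and δ_{⌊(s'+1)/2⌋} ≥ ... ≥ δ_{s'}. -/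
/-- Combinatorial preservation of the upper half of the alternatingly
increasing conditions under taking the product with `ℓ`, when the codegree
`d - s` is 2 or 3.  Here `(h_0,…,h_s)` is the δ-vector of a `d`-dimensional
lattice polytope of degree `s`, with `d-2 ≤ s < d`, and
`δ_i = (i+1)h_i + (d+1-i)h_{i-1}` is the δ-vector of `P × ℓ`. -/
theorem product_preserves_upper_conditions (d s : ℕ) (hd : 1 ≤ d)
    (hds : d - 2 ≤ s) (hs : s < d)
    (h : ℕ → ℤ) (hpos : ∀ i, 0 ≤ h i) (hzero : ∀ j, s < j → h j = 0)
    (hsym : ∀ i, 1 ≤ i → i ≤ (s + 1) / 2 → h (s + 1 - i) ≤ h i)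
    (hchain : ∀ i, (s + 1) / 2 ≤ i → i < s → h (i + 1) ≤ h i) :
    ∀ δ : ℕ → ℤ,
      (∀ c : ℕ,
        δ c = ((c : ℤ) + 1) * h c +
          ((d : ℤ) + 1 - (c : ℤ)) * (if c = 0 then 0 else h (c - 1))) →
      (∀ i, 1 ≤ i → i ≤ (s + 2) / 2 → δ (s + 2 - i) ≤ δ i) ∧
      (∀ i, (s + 2) / 2 ≤ i → i < s + 1 → δ (i + 1) ≤ δ i) := by
  intro δ hδ
  have hd2 : d ≤ s + 2 := by omega
  have hd1 : s + 1 ≤ d := by omega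
  constructor
  · intro i hi1 hi2
    by_cases h1 : i = 1
    · subst h1
      have e0 : s + 2 - 1 = s + 1 := by omega
      rw [e0, hδ (s+1), hδ 1, if_neg (by omega : s + 1 ≠ 0),
        if_neg (by omega : (1:ℕ) ≠ 0)]
      have e1 : s + 1 - 1 = s := by omega
      rw [e1, hzero (s+1) (by omega)]
      have e2 : (1:ℕ) - 1 = 0 := rfl
      rw [e2]
      by_cases hs0 : s = 0
      · subst hs0
        have hz1 : h 1 = 0 := hzero 1 (by omega)
        have c1 : (0:ℤ) ≤ (d:ℤ) + 1 - ((0:ℕ)+1:ℕ) := by push_cast; omega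
        push_cast
        nlinarith [hpos 0]
      · have hsh : h s ≤ h 1 := by
          have := hsym 1 (le_refl 1) (by omega)
          have e3 : s + 1 - 1 = s := by omega
          rwa [e3] at this
        have p1 : (0:ℤ) ≤ (2 - ((d:ℤ) + 1 - (↑s + 1))) * h s := by
          apply mul_nonneg (by omega) (hpos s)
        have p2 : (0:ℤ) ≤ ((d:ℤ) + 1 - 1) * h 0 :=
          mul_nonneg (by omega) (hpos 0)
        push_cast
        nlinarith [p1, p2, hsh]
    · by_cases heq : s + 2 - i = i
      · rw [heq]
      · have h2i : 2 * i ≤ s + 1 := by omega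
        have hA : h (s + 2 - i) ≤ h (i - 1) := by
          have := hsym (i-1) (by omega) (by omega)
          have e1 : s + 1 - (i - 1) = s + 2 - i := by omega
          rwa [e1] at this
        have hB : h (s + 1 - i) ≤ h i := hsym i (by omega) (by omega)
        have hC : h (s + 2 - i) ≤ h (s + 1 - i) := by
          have := hchain (s + 1 - i) (by omega) (by omega)
          have e1 : s + 1 - i + 1 = s + 2 - i := by omega
          rwa [e1] at this
        rw [hδ (s + 2 - i), hδ i, if_neg (by omega : s + 2 - i ≠ 0),
          if_neg (by omega : i ≠ 0)]
        have e1 : s + 2 - i - 1 = s + 1 - i := by omega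
        rw [e1]
        have c1 : ((s + 2 - i : ℕ) : ℤ) = (s:ℤ) + 2 - i := by omega
        rw [c1]
        have p1 : (0:ℤ) ≤ ((d:ℤ) + 1 - i) * (h (i-1) - h (s + 2 - i)) :=
          mul_nonneg (by omega) (by linarith)
        have p2 : (0:ℤ) ≤ ((i:ℤ) + ((d:ℤ) - s - 1)) * (h i - h (s + 1 - i)) :=
          mul_nonneg (by omega) (by linarith)
        have p3 : (0:ℤ) ≤ (1 - ((d:ℤ) - s - 1)) * (h i - h (s + 2 - i)) :=
          mul_nonneg (by omega) (by linarith)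
        nlinarith [p1, p2, p3]
  · intro i hi1 hi2
    by_cases his : i = s
    · subst his
      rw [hδ (i+1), hδ i, if_neg (by omega : i + 1 ≠ 0),
        if_neg (by omega : i ≠ 0)]
      have e1 : i + 1 - 1 = i := by omega
      rw [e1, hzero (i+1) (by omega)]
      have p1 : (0:ℤ) ≤ (((i:ℤ)+1) - ((d:ℤ) + 1 - (↑i+1))) * h i :=
        mul_nonneg (by omega) (hpos i)
      have p2 : (0:ℤ) ≤ ((d:ℤ) + 1 - i) * h (i-1) :=
        mul_nonneg (by omega) (hpos (i-1))
      push_cast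
      nlinarith [p1, p2]
    · have hilt : i < s := by omega
      have hige : 1 ≤ i := by omega
      have hp : h (i + 1) ≤ h i := hchain i (by omega) hilt
      have hq : h (i + 1) ≤ h (i - 1) := by
        by_cases hm : (s + 1) / 2 ≤ i - 1
        · have h2 := hchain (i-1) hm (by omega)
          have e1 : i - 1 + 1 = i := by omega
          rw [e1] at h2
          exact le_trans hp h2
        · by_cases hone : i = 1
          · subst hone
            rw [hzero 2 (by omega)]
            exact hpos 0
          · have := hsym (i-1) (by omega) (by omega)
            have e1 : s + 1 - (i - 1) = i + 1 := by omega
            rwa [e1] at this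
      rw [hδ (i+1), hδ i, if_neg (by omega : i + 1 ≠ 0),
        if_neg (by omega : i ≠ 0)]
      have e1 : i + 1 - 1 = i := by omega
      rw [e1]
      have p1 : (0:ℤ) ≤ (2*(i:ℤ) + 1 - d) * (h i - h (i+1)) :=
        mul_nonneg (by omega) (by linarith)
      have p2 : (0:ℤ) ≤ ((d:ℤ) + 1 - i) * (h (i-1) - h (i+1)) :=
        mul_nonneg (by omega) (by linarith)
      push_cast
      nlinarith [p1, p2]
end

section
/- For all integers k ≥ 0 and i ≥ 0 (not both zero), the δ-vector of Δ^k × ℓ^i is alternatingly increasing; in particular it is unimodal with maximum at index ⌊(2k+i-1)/2⌋. -/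
/-!
Let `t D` be the shifted sequence `c ↦ D (c - 1)` (`shift D`). Multiplying the Ehrhart function
of a lattice polytope of dimension `n` by `m + 1` (taking the product with `ℓ`) turns its δ-vector
`D` into `E_n D` (`eulerOp n D`), where `(E_n D)_c = (c + 1) D_c + (n + 1 - c) D_(c-1)`; as
`(m + 1)(m + 2) / 2 = ((m + 1)^2 + (m + 1)) / 2`, the step from `Δ^k × ℓ^i` to `Δ^(k+1) × ℓ^i`
is `2 D' = E_n (E_n D) + E_n D`.

`E_(s+1)` maps nonnegative symmetric unimodal vectors of degree `s` to such vectors of degree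
`s + 1`, and `E_(s+2) (E_(s+2) D) + E_(s+2) D` splits into three such vectors of degree `s + 2`.
Hence the δ-vectors of the cubes (the Eulerian numbers) and of `Δ^k` are symmetric and unimodal.
Then `E_(s+2)` preserves decompositions `D = A + C` with `A` symmetric unimodal of degree `s` and
`C` symmetric unimodal of degree `s + 1` vanishing at `0`, because
`E_(s+2) (A + C) = E_(s+1) A + (t A + E_(s+2) C)`; such a sum is alternatingly increasing.
-/

open PowerSeries

namespace DeltaVector

section

variable {R : Type*} [CommRing R]

def shift (D : ℕ → R) : ℕ → R
  | 0 => 0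
  | c + 1 => D c

@[simp] theorem shift_zero (D : ℕ → R) : shift D 0 = 0 := rfl

@[simp] theorem shift_succ (D : ℕ → R) (c : ℕ) : shift D (c + 1) = D c := rfl

theorem shift_add (D D' : ℕ → R) : shift (D + D') = shift D + shift D' := by
  funext c; cases c <;> simp

def eulerOp (n : ℕ) (D : ℕ → R) (c : ℕ) : R :=
  (c + 1) * D c + (n + 1 - c) * shift D c

theorem eulerOp_zero (n : ℕ) (D : ℕ → R) : eulerOp n D 0 = D 0 := by
  simp [eulerOp]

theorem eulerOp_add (n : ℕ) (D D' : ℕ → R) :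
    eulerOp n (D + D') = eulerOp n D + eulerOp n D' := by
  funext c; simp only [eulerOp, shift_add, Pi.add_apply]; ring

theorem eulerOp_succ (n : ℕ) (D : ℕ → R) : eulerOp (n + 1) D = eulerOp n D + shift D := by
  funext c; simp only [eulerOp, Pi.add_apply]; push_cast; ring

theorem eulerOp_shift (n : ℕ) (D : ℕ → R) :
    eulerOp (n + 1) (shift D) = shift (eulerOp n D) + shift D := by
  funext c
  cases c with
  | zero => simp [eulerOp]
  | succ c => simp only [eulerOp, shift_succ, Pi.add_apply]; push_cast; ring

theorem eulerOp_zero_single : eulerOp 0 (Pi.single 0 1 : ℕ → R) = Pi.single 0 1 := by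
  funext c
  rcases c with _ | _ | c <;> simp [eulerOp]

theorem coeff_X_mul_eq_shift (G : R⟦X⟧) (c : ℕ) : coeff c (X * G) = shift (coeff · G) c := by
  cases c <;> simp [coeff_succ_X_mul]

theorem derivative_X_mul_mk (f : ℕ → R) : d⁄dX R (X * mk f) = mk fun m => (m + 1) * f m := by
  ext c
  rw [coeff_derivative, coeff_succ_X_mul, coeff_mk, coeff_mk, mul_comm]

theorem derivative_one_sub_X_pow (n : ℕ) :
    d⁄dX R ((1 - X) ^ (n + 1)) = -((n + 1 : R⟦X⟧) * (1 - X) ^ n) := by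
  rw [Derivation.leibniz_pow, map_sub, derivative_X, Derivation.map_one_eq_zero]
  simp only [Nat.add_sub_cancel, nsmul_eq_mul]
  push_cast; ring

theorem one_sub_X_pow_mul_mk_succ_mul (n : ℕ) (f : ℕ → R) :
    (1 - X) ^ (n + 2) * mk (fun m => (m + 1) * f m)
      = (1 - X) * d⁄dX R (X * ((1 - X) ^ (n + 1) * mk f))
        + C ((n : R) + 1) * (X * ((1 - X) ^ (n + 1) * mk f)) := by
  rw [mul_left_comm, Derivation.leibniz, derivative_X_mul_mk, derivative_one_sub_X_pow, smul_eq_mul,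
    smul_eq_mul, map_add, map_natCast, map_one]
  ring

theorem coeff_eulerOp_series (n : ℕ) (G : R⟦X⟧) :
    (coeff · ((1 - X) * d⁄dX R (X * G) + C ((n : R) + 1) * (X * G))) = eulerOp n (coeff · G) := by
  funext c
  rw [map_add (coeff c), coeff_C_mul, sub_mul, one_mul, map_sub, eulerOp]
  cases c with
  | zero => simp only [coeff_derivative, coeff_succ_X_mul, coeff_zero_X_mul, shift_zero]; ring
  | succ c =>
    simp only [coeff_derivative, coeff_succ_X_mul, shift_succ]
    push_cast; ring

theorem coeff_one_sub_X_pow_mul_mk_succ_mul (n : ℕ) (f : ℕ → R) :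
    (coeff · ((1 - X) ^ (n + 2) * mk (fun m => (m + 1) * f m)))
      = eulerOp n (coeff · ((1 - X) ^ (n + 1) * mk f)) := by
  rw [one_sub_X_pow_mul_mk_succ_mul, coeff_eulerOp_series]

end

structure IsSymmUnimodal (D : ℕ → ℤ) (s : ℕ) : Prop where
  nonneg : ∀ j, 0 ≤ D j
  eq_zero_of_lt : ∀ j, s < j → D j = 0
  symm : ∀ a b, a + b = s → D a = D b
  le_succ : ∀ a, 2 * a + 1 ≤ s → D a ≤ D (a + 1)

def IsAltIncreasing (D : ℕ → ℤ) (s : ℕ) : Prop :=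
  (∀ a, a ≤ s / 2 → D a ≤ D (s - a)) ∧ (∀ a, a + 1 ≤ (s + 1) / 2 → D (s - a) ≤ D (a + 1))

def IsUnimodalAt (D : ℕ → ℤ) (p : ℕ) : Prop :=
  (∀ a, a < p → D a ≤ D (a + 1)) ∧ (∀ a, p ≤ a → D (a + 1) ≤ D a)

theorem IsUnimodalAt.add {D D' : ℕ → ℤ} {p : ℕ} (h : IsUnimodalAt D p) (h' : IsUnimodalAt D' p) :
    IsUnimodalAt (D + D') p :=
  ⟨fun a ha => add_le_add (h.1 a ha) (h'.1 a ha), fun a ha => add_le_add (h.2 a ha) (h'.2 a ha)⟩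

theorem isSymmUnimodal_zero (s : ℕ) : IsSymmUnimodal 0 s :=
  ⟨fun _ => le_rfl, fun _ _ => rfl, fun _ _ _ => rfl, fun _ _ => le_rfl⟩

theorem isSymmUnimodal_single : IsSymmUnimodal (Pi.single 0 1) 0 where
  nonneg j := by rcases j with _ | j <;> simp
  eq_zero_of_lt j hj := Pi.single_eq_of_ne (by omega) 1
  symm a b hab := by rw [Nat.eq_zero_of_add_eq_zero_right hab, Nat.eq_zero_of_add_eq_zero_left hab]
  le_succ a ha := by omega

namespace IsSymmUnimodal

variable {D D' : ℕ → ℤ} {s : ℕ}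

theorem add (h : IsSymmUnimodal D s) (h' : IsSymmUnimodal D' s) : IsSymmUnimodal (D + D') s where
  nonneg j := add_nonneg (h.nonneg j) (h'.nonneg j)
  eq_zero_of_lt j hj := by simp [h.eq_zero_of_lt j hj, h'.eq_zero_of_lt j hj]
  symm a b hab := by simp [h.symm a b hab, h'.symm a b hab]
  le_succ a ha := add_le_add (h.le_succ a ha) (h'.le_succ a ha)

theorem of_two_smul (h : IsSymmUnimodal ((2 : ℤ) • D) s) : IsSymmUnimodal D s where
  nonneg j := by
    have := h.nonneg j
    simp only [Pi.smul_apply, smul_eq_mul] at this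
    omega
  eq_zero_of_lt j hj := by simpa using h.eq_zero_of_lt j hj
  symm a b hab := by simpa using h.symm a b hab
  le_succ a ha := by
    have := h.le_succ a ha
    simp only [Pi.smul_apply, smul_eq_mul] at this
    omega

theorem shift_nonneg (h : IsSymmUnimodal D s) (c : ℕ) : 0 ≤ shift D c := by
  cases c with
  | zero => exact le_rfl
  | succ c => exact h.nonneg c

theorem shift_eq_of_lt (h : IsSymmUnimodal D s) {c : ℕ} (hc : s + 1 < c) : shift D c = 0 := by
  obtain ⟨c, rfl⟩ : ∃ c', c = c' + 1 := ⟨c - 1, by omega⟩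
  exact h.eq_zero_of_lt c (by omega)

theorem shift_eq (h : IsSymmUnimodal D s) {a b : ℕ} (hab : a + b = s + 1) : shift D b = D a := by
  cases b with
  | zero => rw [shift_zero, h.eq_zero_of_lt a (by omega)]
  | succ b => exact h.symm b a (by omega)

theorem shift_le_self (h : IsSymmUnimodal D s) {a : ℕ} (ha : 2 * a ≤ s + 1) : shift D a ≤ D a := by
  cases a with
  | zero => exact h.nonneg 0
  | succ a => exact h.le_succ a (by omega)

theorem shift_le_succ (h : IsSymmUnimodal D s) {a : ℕ} (ha : 2 * a ≤ s) :
    shift D a ≤ D (a + 1) := by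
  cases a with
  | zero => exact h.nonneg 1
  | succ a =>
    rcases Nat.lt_or_ge (2 * a + 2) s with hlt | hge
    · exact (h.le_succ a (by omega)).trans (h.le_succ (a + 1) (by omega))
    · exact (h.symm a (a + 2) (by omega)).le

theorem add_shift (h : IsSymmUnimodal D s) : IsSymmUnimodal (D + shift D) (s + 1) where
  nonneg j := add_nonneg (h.nonneg j) (h.shift_nonneg j)
  eq_zero_of_lt j hj := by simp [h.eq_zero_of_lt j (by omega), h.shift_eq_of_lt hj]
  symm a b hab := by
    simp only [Pi.add_apply, h.shift_eq hab, h.shift_eq (b := a) (a := b) (by omega)]; ring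
  le_succ a ha := by
    simp only [Pi.add_apply, shift_succ]
    linarith [h.shift_le_succ (a := a) (by omega)]

theorem eulerOp (h : IsSymmUnimodal D s) : IsSymmUnimodal (eulerOp (s + 1) D) (s + 1) where
  nonneg j := by
    rcases Nat.lt_or_ge (s + 1) j with hj | hj
    · simp [DeltaVector.eulerOp, h.eq_zero_of_lt j (by omega), h.shift_eq_of_lt hj]
    · have hcoeff : (0 : ℤ) ≤ s + 1 + 1 - j := by omega
      have := h.nonneg j
      have := h.shift_nonneg j
      unfold DeltaVector.eulerOp
      positivity
  eq_zero_of_lt j hj := by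
    simp [DeltaVector.eulerOp, h.eq_zero_of_lt j (by omega), h.shift_eq_of_lt hj]
  symm a b hab := by
    have hb : (b : ℤ) = s + 1 - a := by omega
    simp only [DeltaVector.eulerOp, h.shift_eq hab, h.shift_eq (b := a) (a := b) (by omega), hb]
    push_cast; ring
  le_succ a ha := by
    have h₁ : 0 ≤ ((a : ℤ) + 2) * (D (a + 1) - DeltaVector.shift D a) :=
      mul_nonneg (by positivity) (sub_nonneg.2 (h.shift_le_succ (by omega)))
    have h₂ : 0 ≤ ((s : ℤ) - 2 * a) * (D a - DeltaVector.shift D a) :=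
      mul_nonneg (by omega) (sub_nonneg.2 (h.shift_le_self (by omega)))
    simp only [DeltaVector.eulerOp, shift_succ]
    push_cast
    linear_combination h₁ + h₂

theorem shift (h : IsSymmUnimodal D s) : IsSymmUnimodal (DeltaVector.shift D) (s + 2) where
  nonneg := h.shift_nonneg
  eq_zero_of_lt j hj := h.shift_eq_of_lt (by omega)
  symm a b hab := by
    cases a with
    | zero => rw [shift_zero, h.shift_eq_of_lt (by omega)]
    | succ a => exact (h.shift_eq (by omega)).symm
  le_succ a ha := h.shift_le_self (by omega)

theorem isUnimodalAt (h : IsSymmUnimodal D s) {p : ℕ} (hp : s / 2 ≤ p) (hp' : p ≤ (s + 1) / 2) :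
    IsUnimodalAt D p := by
  refine ⟨fun a ha => h.le_succ a (by omega), fun a ha => ?_⟩
  rcases Nat.lt_or_ge s (a + 1) with hs | hs
  · rw [h.eq_zero_of_lt _ hs]; exact h.nonneg a
  · obtain ⟨b, rfl⟩ : ∃ b, s = a + 1 + b := ⟨s - (a + 1), by omega⟩
    rw [h.symm (a + 1) b rfl, ← h.symm (b + 1) a (by omega)]
    exact h.le_succ b (by omega)

theorem eulerOp_eulerOp_add (h : IsSymmUnimodal D s) :
    IsSymmUnimodal
      (DeltaVector.eulerOp (s + 2) (DeltaVector.eulerOp (s + 2) D) + DeltaVector.eulerOp (s + 2) D)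
      (s + 2) := by
  have key : DeltaVector.eulerOp (s + 2) (DeltaVector.eulerOp (s + 2) D)
        + DeltaVector.eulerOp (s + 2) D
      = DeltaVector.eulerOp (s + 2) (DeltaVector.eulerOp (s + 1) D)
        + (DeltaVector.eulerOp (s + 1) D + DeltaVector.shift (DeltaVector.eulerOp (s + 1) D))
        + (DeltaVector.shift D + DeltaVector.shift D) := by
    rw [eulerOp_succ (s + 1) D, eulerOp_add, eulerOp_shift]
    abel
  rw [key]
  exact (h.eulerOp.eulerOp.add h.eulerOp.add_shift).add (h.shift.add h.shift)

end IsSymmUnimodal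

/-- The symmetric decomposition `D = A + t B` of the δ-vector, with `C = t B`. -/
def HasSymmDecomp (D : ℕ → ℤ) (s : ℕ) : Prop :=
  ∃ A C, IsSymmUnimodal A s ∧ IsSymmUnimodal C (s + 1) ∧ C 0 = 0 ∧ D = A + C

theorem IsSymmUnimodal.hasSymmDecomp {D : ℕ → ℤ} {s : ℕ} (h : IsSymmUnimodal D s) :
    HasSymmDecomp D s :=
  ⟨D, 0, h, isSymmUnimodal_zero _, rfl, (add_zero D).symm⟩

namespace HasSymmDecomp

variable {D : ℕ → ℤ} {s : ℕ}

theorem eulerOp (h : HasSymmDecomp D s) : HasSymmDecomp (eulerOp (s + 2) D) (s + 1) := by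
  obtain ⟨A, C, hA, hC, hC0, rfl⟩ := h
  refine ⟨DeltaVector.eulerOp (s + 1) A, shift A + DeltaVector.eulerOp (s + 2) C, hA.eulerOp,
    hA.shift.add hC.eulerOp, by simp [eulerOp_zero, hC0], ?_⟩
  rw [eulerOp_add, eulerOp_succ (s + 1) A]
  abel

theorem eq_zero_of_lt (h : HasSymmDecomp D s) {j : ℕ} (hj : s < j) : D j = 0 := by
  obtain ⟨A, C, hA, hC, hC0, rfl⟩ := h
  rw [Pi.add_apply, hA.eq_zero_of_lt j hj, zero_add]
  rcases Nat.lt_or_ge (s + 1) j with hj' | hj'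
  · exact hC.eq_zero_of_lt j hj'
  · rw [hC.symm j 0 (by omega), hC0]

theorem isAltIncreasing (h : HasSymmDecomp D s) : IsAltIncreasing D s := by
  obtain ⟨A, C, hA, hC, -, rfl⟩ := h
  refine ⟨fun a ha => ?_, fun a ha => ?_⟩
  · rw [Pi.add_apply, Pi.add_apply, hA.symm a (s - a) (by omega),
      ← hC.symm (a + 1) (s - a) (by omega)]
    exact add_le_add le_rfl (hC.le_succ a (by omega))
  · rw [Pi.add_apply, Pi.add_apply, hA.symm (s - a) a (by omega),
      hC.symm (s - a) (a + 1) (by omega)]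
    exact add_le_add (hA.le_succ a (by omega)) le_rfl

theorem isUnimodalAt (h : HasSymmDecomp D s) : IsUnimodalAt D ((s + 1) / 2) := by
  obtain ⟨A, C, hA, hC, -, rfl⟩ := h
  exact (hA.isUnimodalAt (by omega) le_rfl).add (hC.isUnimodalAt (by omega) (by omega))

end HasSymmDecomp

end DeltaVector

namespace SimplexCube

open DeltaVector

-- The number of lattice points of `m • (Δ^k × ℓ^i)`.
def ehrhart (k i : ℕ) (m : ℕ) : ℤ :=
  (((m : ℤ) + 1) * ((m : ℤ) + 2) / 2) ^ k * ((m : ℤ) + 1) ^ i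

noncomputable def delta (k i : ℕ) : ℕ → ℤ :=
  (coeff · ((1 - X) ^ (2 * k + i + 1) * mk (ehrhart k i)))

theorem delta_apply_zero (k i : ℕ) : delta k i 0 = 1 := by
  simp [delta, ehrhart, coeff_zero_eq_constantCoeff_apply]

theorem delta_zero_zero : delta 0 0 = Pi.single 0 1 := by
  have h : ehrhart 0 0 = 1 := by
    funext m; simp [ehrhart]
  funext c
  rw [delta, h, pow_one, mul_comm, mk_one_mul_one_sub_eq_one, coeff_one, Pi.single_apply]

theorem delta_succ_right (k i : ℕ) : delta k (i + 1) = eulerOp (2 * k + i) (delta k i) := by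
  have he : ehrhart k (i + 1) = fun m : ℕ => ((m : ℤ) + 1) * ehrhart k i m := by
    funext m; simp only [ehrhart, pow_succ]; ring
  unfold delta
  rw [he, show 2 * k + (i + 1) + 1 = 2 * k + i + 2 by omega]
  exact coeff_one_sub_X_pow_mul_mk_succ_mul _ _

theorem two_mul_ehrhart_succ_left (k i m : ℕ) :
    2 * ehrhart (k + 1) i m = ehrhart k (i + 2) m + ehrhart k (i + 1) m := by
  have h2 : 2 * (((m : ℤ) + 1) * ((m : ℤ) + 2) / 2) = ((m : ℤ) + 1) * ((m : ℤ) + 2) := by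
    refine Int.mul_ediv_cancel' ?_
    simpa [add_assoc, one_add_one_eq_two] using (Int.even_mul_succ_self ((m : ℤ) + 1)).two_dvd
  simp only [ehrhart]
  linear_combination ((((m : ℤ) + 1) * ((m : ℤ) + 2) / 2) ^ k * ((m : ℤ) + 1) ^ i) * h2

theorem two_smul_delta_succ_left (k i : ℕ) :
    (2 : ℤ) • delta (k + 1) i = eulerOp (2 * k + i) (delta k (i + 1)) + delta k (i + 1) := by
  have hseries : C (2 : ℤ) * ((1 - X) ^ (2 * (k + 1) + i + 1) * mk (ehrhart (k + 1) i))
      = (1 - X) ^ (2 * k + (i + 2) + 1) * mk (ehrhart k (i + 2))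
        + (1 - X) * ((1 - X) ^ (2 * k + (i + 1) + 1) * mk (ehrhart k (i + 1))) := by
    have hmk : C (2 : ℤ) * mk (ehrhart (k + 1) i)
        = mk (ehrhart k (i + 2)) + mk (ehrhart k (i + 1)) := by
      ext c; rw [map_add, coeff_C_mul, coeff_mk, coeff_mk, coeff_mk, two_mul_ehrhart_succ_left]
    rw [show 2 * (k + 1) + i + 1 = 2 * k + (i + 2) + 1 by omega, mul_left_comm, hmk,
      show 2 * k + (i + 2) + 1 = 2 * k + (i + 1) + 1 + 1 by omega, pow_succ]
    ring
  have hcoeff : (2 : ℤ) • delta (k + 1) i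
      = delta k (i + 2) + (delta k (i + 1) - shift (delta k (i + 1))) := by
    funext c
    have := congrArg (coeff c) hseries
    simp only [coeff_C_mul, map_add, sub_mul, one_mul, map_sub, coeff_X_mul_eq_shift] at this
    simp only [Pi.smul_apply, Pi.add_apply, Pi.sub_apply, smul_eq_mul]
    exact this
  rw [hcoeff, delta_succ_right k (i + 1), show 2 * k + (i + 1) = 2 * k + i + 1 by omega,
    eulerOp_succ]
  abel

theorem isSymmUnimodal_delta_zero_left (i : ℕ) : IsSymmUnimodal (delta 0 i) (i - 1) := by
  induction i with
  | zero => rw [delta_zero_zero]; exact isSymmUnimodal_single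
  | succ i ih =>
    rw [delta_succ_right, mul_zero, zero_add, Nat.add_sub_cancel]
    cases i with
    | zero => rw [delta_zero_zero, eulerOp_zero_single]; exact isSymmUnimodal_single
    | succ i => exact ih.eulerOp

theorem isSymmUnimodal_delta_succ_zero (k : ℕ) : IsSymmUnimodal (delta (k + 1) 0) (2 * k) := by
  induction k with
  | zero =>
    refine IsSymmUnimodal.of_two_smul ?_
    rw [two_smul_delta_succ_left, delta_succ_right, delta_zero_zero, mul_zero, add_zero,
      eulerOp_zero_single, eulerOp_zero_single]
    exact isSymmUnimodal_single.add isSymmUnimodal_single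
  | succ k ih =>
    refine IsSymmUnimodal.of_two_smul ?_
    rw [two_smul_delta_succ_left, delta_succ_right, mul_add, mul_one]
    exact ih.eulerOp_eulerOp_add

theorem hasSymmDecomp_delta_succ_left (k i : ℕ) : HasSymmDecomp (delta (k + 1) i) (2 * k + i) := by
  induction i with
  | zero => exact (isSymmUnimodal_delta_succ_zero k).hasSymmDecomp
  | succ i ih =>
    rw [delta_succ_right, show 2 * (k + 1) + i = 2 * k + i + 2 by ring]
    exact ih.eulerOp

end SimplexCube

open DeltaVector SimplexCube in
theorem delta_simplex_cube_alternatingly_increasing_general (k i : ℕ) :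
    ∀ D : ℕ → ℤ,
      (∀ c : ℕ,
        D c = PowerSeries.coeff (R := ℤ) c ((1 - PowerSeries.X) ^ (2 * k + i + 1) *
          PowerSeries.mk (fun m : ℕ =>
            ((((m : ℤ) + 1) * ((m : ℤ) + 2) / 2) ^ k * ((m : ℤ) + 1) ^ i : ℤ)))) →
      ∃ s : ℕ, (∀ j, s < j → D j = 0) ∧ D s ≠ 0 ∧
        -- alternatingly increasing: D_0 ≤ D_s ≤ D_1 ≤ D_{s-1} ≤ ⋯ ≤ D_{⌊(s+1)/2⌋}
        ((∀ a, a ≤ s / 2 → D a ≤ D (s - a)) ∧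
          (∀ a, a + 1 ≤ (s + 1) / 2 → D (s - a) ≤ D (a + 1))) ∧
        -- unimodal with maximum at index ⌊(2k+i-1)/2⌋
        ((∀ a, a < (2 * k + i - 1) / 2 → D a ≤ D (a + 1)) ∧
          (∀ a, (2 * k + i - 1) / 2 ≤ a → D (a + 1) ≤ D a)) := by
  intro D hD
  obtain rfl : D = delta k i := funext hD
  obtain ⟨s, hdecomp, hunimodal⟩ :
      ∃ s, HasSymmDecomp (delta k i) s ∧ IsUnimodalAt (delta k i) ((2 * k + i - 1) / 2) := by
    rcases k with _ | k
    · have h := isSymmUnimodal_delta_zero_left i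
      exact ⟨i - 1, h.hasSymmDecomp, h.isUnimodalAt (by omega) (by omega)⟩
    · refine ⟨2 * k + i, hasSymmDecomp_delta_succ_left k i, ?_⟩
      rw [show (2 * (k + 1) + i - 1) / 2 = (2 * k + i + 1) / 2 by omega]
      exact (hasSymmDecomp_delta_succ_left k i).isUnimodalAt
  have hAI := hdecomp.isAltIncreasing
  have hs : 1 ≤ delta k i s := by simpa [delta_apply_zero] using hAI.1 0 (Nat.zero_le _)
  exact ⟨s, fun _ => hdecomp.eq_zero_of_lt, by omega, hAI, hunimodal⟩

/-- For all `k, i ≥ 0`, not both zero, the δ-vector of `Δ^k × ℓ^i` is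
alternatingly increasing; in particular it is unimodal with maximum at index
`⌊(2k+i-1)/2⌋`.  Here `Δ` is the standard 2-simplex and `ℓ` the unit segment,
so `#(m(Δ^k × ℓ^i)) = ((m+1)(m+2)/2)^k (m+1)^i` and `dim = 2k + i`. -/
theorem delta_simplex_cube_alternatingly_increasing (k i : ℕ) (hki : ¬(k = 0 ∧ i = 0)) :
    ∀ D : ℕ → ℤ,
      (∀ c : ℕ,
        D c = PowerSeries.coeff (R := ℤ) c ((1 - PowerSeries.X) ^ (2 * k + i + 1) *
          PowerSeries.mk (fun m : ℕ =>
            ((((m : ℤ) + 1) * ((m : ℤ) + 2) / 2) ^ k * ((m : ℤ) + 1) ^ i : ℤ)))) →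
      ∃ s : ℕ, (∀ j, s < j → D j = 0) ∧ D s ≠ 0 ∧
        -- alternatingly increasing: D_0 ≤ D_s ≤ D_1 ≤ D_{s-1} ≤ ⋯ ≤ D_{⌊(s+1)/2⌋}
        ((∀ a, a ≤ s / 2 → D a ≤ D (s - a)) ∧
          (∀ a, a + 1 ≤ (s + 1) / 2 → D (s - a) ≤ D (a + 1))) ∧
        -- unimodal with maximum at index ⌊(2k+i-1)/2⌋
        ((∀ a, a < (2 * k + i - 1) / 2 → D a ≤ D (a + 1)) ∧
          (∀ a, (2 * k + i - 1) / 2 ≤ a → D (a + 1) ≤ D a)) :=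
  delta_simplex_cube_alternatingly_increasing_general k i
end

section
/- For all integers i ≥ j ≥ -1, the coefficient sequence of the polynomial A(i,j,t) = (1-t)^{i+2} Σ_{n≥0} t^n n^{j+1}(n+1)^{i-j} is unimodal. -/
/-!
With `a = j + 1` and `b = i - j`, the operators `X • d/dX` and `d/dX ∘ (X • ·)` multiply the
`n`-th coefficient of `∑ nᵃ (n + 1)ᵇ Xⁿ` by `n` and by `n + 1`. After clearing the factor
`(1 - X)^(a + b + 1)` both become maps of the form
`g k = (k + α) f k + (γ + 1 - k) f (k - 1)` on coefficient sequences, and such a map preserves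
nonnegativity, log-concavity and the absence of internal zeros of a sequence supported in
`[0, γ]`: `g k ^ 2 - g (k - 1) g (k + 1)` is a nonnegative combination of the log-concavity
defects of `f` plus `(f k - f (k - 1)) ^ 2`. Starting from `a = b = 0`, where the product is `1`,
every coefficient sequence is therefore log-concave without internal zeros, hence unimodal.
-/

open PowerSeries

section Sequences

variable {R : Type*} [CommRing R] [LinearOrder R] [IsStrictOrderedRing R]

def IsUnimodal (f : ℕ → R) : Prop :=
  ∃ p, (∀ a < p, f a ≤ f (a + 1)) ∧ ∀ a, p ≤ a → f (a + 1) ≤ f a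

structure IsLogConcaveSeq (N : ℕ) (f : ℕ → R) : Prop where
  nonneg : ∀ k, 0 ≤ f k
  mul_le_sq : ∀ k, f k * f (k + 2) ≤ f (k + 1) ^ 2
  ordConnected : Set.OrdConnected {k | 0 < f k}
  eq_zero_of_lt : ∀ k, N < k → f k = 0

namespace IsLogConcaveSeq

variable {N : ℕ} {f : ℕ → R}

theorem mul_le_mul_add_three (h : IsLogConcaveSeq N f) (k : ℕ) :
    f k * f (k + 3) ≤ f (k + 1) * f (k + 2) := by
  rcases (h.nonneg k).eq_or_lt with h0 | h0
  · rw [← h0, zero_mul]; exact mul_nonneg (h.nonneg _) (h.nonneg _)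
  rcases (h.nonneg (k + 3)).eq_or_lt with h3 | h3
  · rw [← h3, mul_zero]; exact mul_nonneg (h.nonneg _) (h.nonneg _)
  have h1 : 0 < f (k + 1) := h.ordConnected.out h0 h3 ⟨by omega, by omega⟩
  have h2 : 0 < f (k + 2) := h.ordConnected.out h0 h3 ⟨by omega, by omega⟩
  nlinarith [h.mul_le_sq k, h.mul_le_sq (k + 1), mul_pos h1 h2]

theorem antitone_of_lt (h : IsLogConcaveSeq N f) {k : ℕ} (hk : f (k + 1) < f k) :
    ∀ l, k ≤ l → f (l + 1) ≤ f l := by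
  have hfk : 0 < f k := (h.nonneg _).trans_lt hk
  intro l hl
  induction l, hl using Nat.le_induction with
  | base => exact hk.le
  | succ l hkl ih =>
    rcases (h.nonneg (l + 1)).eq_or_lt with h0 | hpos
    · rw [← h0]
      refine not_lt.mp fun h2 => h0.not_lt ?_
      exact h.ordConnected.out hfk h2 ⟨by omega, by omega⟩
    · nlinarith [h.mul_le_sq l]

theorem isUnimodal (h : IsLogConcaveSeq N f) : IsUnimodal f := by
  classical
  have hex : ∃ p, ∀ a, p ≤ a → f (a + 1) ≤ f a :=
    ⟨N + 1, fun a ha => by rw [h.eq_zero_of_lt a (by omega), h.eq_zero_of_lt (a + 1) (by omega)]⟩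
  refine ⟨Nat.find hex, fun a ha => ?_, Nat.find_spec hex⟩
  by_contra! hlt
  exact Nat.find_min hex ha (h.antitone_of_lt hlt)

end IsLogConcaveSeq

theorem isLogConcaveSeq_coeff_one : IsLogConcaveSeq 0 (coeff · (1 : R⟦X⟧)) where
  nonneg k := by rw [coeff_one]; split_ifs <;> simp
  mul_le_sq k := by simp [coeff_one]
  ordConnected := by
    refine ⟨fun _ _ l hl m ⟨_, hml⟩ => ?_⟩
    obtain rfl : l = 0 := by by_contra h; simp [coeff_one, h] at hl
    obtain rfl : m = 0 := by omega
    exact hl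
  eq_zero_of_lt k hk := by rw [coeff_one, if_neg (by omega)]

/-- The terms `g k, g (k + 1), g (k + 2)` of `g k = (k + α) f k + (γ + 1 - k) f (k - 1)`, with
`p = k + 1 + α`, `q = γ - k` and `x, y, z, w = f (k - 1), …, f (k + 2)`. -/
theorem step_mul_le_sq {p q x y z w : R} (hp : 1 ≤ p) (hq : 1 ≤ q) (hyw : y * w ≤ z ^ 2)
    (hxz : x * z ≤ y ^ 2) (hxw : x * w ≤ y * z) :
    ((p - 1) * y + (q + 1) * x) * ((p + 1) * w + (q - 1) * z) ≤ (p * z + q * y) ^ 2 := by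
  have key : (p * z + q * y) ^ 2 - ((p - 1) * y + (q + 1) * x) * ((p + 1) * w + (q - 1) * z) =
      (p ^ 2 - 1) * (z ^ 2 - y * w) + (q ^ 2 - 1) * (y ^ 2 - x * z) +
        (p + 1) * (q + 1) * (y * z - x * w) + (z - y) ^ 2 := by ring
  have h1 : 0 ≤ (p ^ 2 - 1) * (z ^ 2 - y * w) := mul_nonneg (by nlinarith) (by linarith)
  have h2 : 0 ≤ (q ^ 2 - 1) * (y ^ 2 - x * z) := mul_nonneg (by nlinarith) (by linarith)
  have h3 : 0 ≤ (p + 1) * (q + 1) * (y * z - x * w) :=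
    mul_nonneg (mul_nonneg (by linarith) (by linarith)) (by linarith)
  linarith [sq_nonneg (z - y)]

end Sequences

section EulerStep

variable {R : Type*} [CommRing R]

noncomputable def eulerStep (α γ : ℕ) (F : R⟦X⟧) : R⟦X⟧ :=
  C (α : R) * F + X * ((1 - X) * d⁄dX R F + C (γ : R) * F)

theorem coeff_eulerStep (α γ : ℕ) (F : R⟦X⟧) (k : ℕ) :
    coeff k (eulerStep α γ F) = (k + α) * coeff k F + (γ + 1 - k) * coeff k (X * F) := by
  have hD : constantCoeff (d⁄dX R F) = coeff 1 F := by simpa using coeff_derivative F 0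
  rcases k with _ | _ | k <;>
    simp [eulerStep, coeff_derivative, sub_mul, coeff_succ_X_mul, hD, -map_natCast] <;> ring

end EulerStep

namespace IsLogConcaveSeq

variable {R : Type*} [CommRing R] [LinearOrder R] [IsStrictOrderedRing R]
variable {N α γ : ℕ} {F : R⟦X⟧}

theorem coeff_X_mul (h : IsLogConcaveSeq N (coeff · F)) :
    IsLogConcaveSeq (N + 1) (coeff · (X * F)) where
  nonneg k := by
    rcases k with _ | k
    · simp
    · simpa [coeff_succ_X_mul] using h.nonneg k
  mul_le_sq k := by
    rcases k with _ | k
    · simp [sq_nonneg]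
    · simpa [coeff_succ_X_mul] using h.mul_le_sq k
  ordConnected := by
    refine ⟨fun k hk l hl m ⟨hkm, hml⟩ => ?_⟩
    obtain ⟨k, rfl⟩ : ∃ k', k = k' + 1 := Nat.exists_eq_succ_of_ne_zero (by rintro rfl; simp at hk)
    obtain ⟨m, rfl⟩ : ∃ m', m = m' + 1 := ⟨m - 1, by omega⟩
    obtain ⟨l, rfl⟩ : ∃ l', l = l' + 1 := ⟨l - 1, by omega⟩
    simp only [Set.mem_ofPred_eq, coeff_succ_X_mul] at hk hl ⊢
    exact h.ordConnected.out hk hl ⟨by omega, by omega⟩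
  eq_zero_of_lt k hk := by
    rcases k with _ | k
    · omega
    · simpa [coeff_succ_X_mul] using h.eq_zero_of_lt k (by omega)

theorem coeff_eulerStep_eq_zero (hF : IsLogConcaveSeq N (coeff · F)) {k : ℕ} (hk : N + 1 < k) :
    coeff k (eulerStep α γ F) = 0 := by
  simp [coeff_eulerStep, hF.eq_zero_of_lt k (by omega), hF.coeff_X_mul.eq_zero_of_lt k hk]

theorem mul_coeff_X_mul_nonneg (hF : IsLogConcaveSeq N (coeff · F)) (hγ : N ≤ γ) (k : ℕ) :
    0 ≤ ((γ : R) + 1 - k) * coeff k (X * F) := by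
  rcases le_or_gt k (N + 1) with hk | hk
  · refine mul_nonneg ?_ (hF.coeff_X_mul.nonneg k)
    rw [sub_nonneg]
    exact_mod_cast (by omega : k ≤ γ + 1)
  · simp [hF.coeff_X_mul.eq_zero_of_lt k hk]

theorem coeff_eulerStep_nonneg (hF : IsLogConcaveSeq N (coeff · F)) (hγ : N ≤ γ) (k : ℕ) :
    0 ≤ coeff k (eulerStep α γ F) := by
  rw [coeff_eulerStep]
  exact add_nonneg (mul_nonneg (by positivity) (hF.nonneg k)) (hF.mul_coeff_X_mul_nonneg hγ k)

theorem exists_coeff_pos_of_coeff_eulerStep_pos (hF : IsLogConcaveSeq N (coeff · F)) {k : ℕ}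
    (hk : 0 < coeff k (eulerStep α γ F)) : ∃ j ≤ k, k ≤ j + 1 ∧ 0 < coeff j F := by
  rw [coeff_eulerStep] at hk
  rcases (hF.nonneg k).eq_or_lt with h0 | h0
  · rw [← h0, mul_zero, zero_add] at hk
    rcases k with _ | j
    · simp at hk
    · rw [coeff_succ_X_mul] at hk
      exact ⟨j, by omega, le_rfl, (hF.nonneg j).lt_of_ne fun h => by simp [← h] at hk⟩
  · exact ⟨k, le_rfl, by omega, h0⟩

theorem coeff_eulerStep_mul_le_sq (hF : IsLogConcaveSeq N (coeff · F)) (hγ : N ≤ γ) (k : ℕ) :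
    coeff k (eulerStep α γ F) * coeff (k + 2) (eulerStep α γ F) ≤
      coeff (k + 1) (eulerStep α γ F) ^ 2 := by
  rcases lt_or_ge k N with hk | hk
  · have hxz := hF.coeff_X_mul.mul_le_sq k
    have hxw := hF.coeff_X_mul.mul_le_mul_add_three k
    simp only [coeff_succ_X_mul] at hxz hxw
    have hp : (1 : R) ≤ k + 1 + α := by
      linarith [(k.cast_nonneg : (0 : R) ≤ k), (α.cast_nonneg : (0 : R) ≤ α)]
    have hq : (1 : R) ≤ γ - k := by
      rw [le_sub_iff_add_le]
      exact_mod_cast (by omega : 1 + k ≤ γ)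
    simp only [coeff_eulerStep, coeff_succ_X_mul]
    push_cast
    convert step_mul_le_sq hp hq (hF.mul_le_sq k) hxz hxw using 2 <;> ring
  · rw [hF.coeff_eulerStep_eq_zero (by omega : N + 1 < k + 2), mul_zero]
    exact sq_nonneg _

theorem ordConnected_coeff_eulerStep (hF : IsLogConcaveSeq N (coeff · F)) (hγ : N ≤ γ) :
    Set.OrdConnected {k | 0 < coeff k (eulerStep α γ F)} := by
  refine ⟨fun k hk l hl m ⟨hkm, hml⟩ => ?_⟩
  rcases hkm.eq_or_lt with rfl | hkm
  · exact hk
  rcases hml.eq_or_lt with rfl | hml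
  · exact hl
  obtain ⟨k', hk'k, -, hk'⟩ := hF.exists_coeff_pos_of_coeff_eulerStep_pos hk
  obtain ⟨l', -, hll', hl'⟩ := hF.exists_coeff_pos_of_coeff_eulerStep_pos hl
  have hm : 0 < coeff m F := hF.ordConnected.out hk' hl' ⟨by omega, by omega⟩
  have hmα : (0 : R) < m + α := by
    have : (0 : R) < m := by exact_mod_cast (by omega : 0 < m)
    positivity
  rw [Set.mem_ofPred_eq, coeff_eulerStep]
  exact add_pos_of_pos_of_nonneg (mul_pos hmα hm) (hF.mul_coeff_X_mul_nonneg hγ m)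

theorem map_eulerStep (hF : IsLogConcaveSeq N (coeff · F)) (hγ : N ≤ γ) :
    IsLogConcaveSeq (N + 1) (coeff · (eulerStep α γ F)) :=
  ⟨hF.coeff_eulerStep_nonneg hγ, hF.coeff_eulerStep_mul_le_sq hγ,
    hF.ordConnected_coeff_eulerStep hγ, fun _ => hF.coeff_eulerStep_eq_zero⟩

end IsLogConcaveSeq

noncomputable def S (a b : ℕ) : ℤ⟦X⟧ :=
  mk fun n => (n : ℤ) ^ a * ((n : ℤ) + 1) ^ b

/-- The paper's `A(i, j, t)` is `A (j + 1) (i - j)`. -/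
noncomputable def A (a b : ℕ) : ℤ⟦X⟧ :=
  (1 - X) ^ (a + b + 1) * S a b

theorem S_succ_left (a b : ℕ) : S (a + 1) b = X * d⁄dX ℤ (S a b) := by
  ext (_ | n)
  · simp [S]
  · simp only [S, coeff_succ_X_mul, coeff_derivative, coeff_mk]
    push_cast
    ring

theorem S_succ_right (a b : ℕ) : S a (b + 1) = d⁄dX ℤ (X * S a b) := by
  ext n
  simp only [S, coeff_succ_X_mul, coeff_derivative, coeff_mk]
  ring

theorem A_zero_zero : A 0 0 = 1 := by
  simp only [A, S, pow_zero, mul_one, zero_add, pow_one]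
  rw [mul_comm]
  exact mk_one_mul_one_sub_eq_one ℤ

theorem one_sub_X_mul_derivative_A (a b : ℕ) :
    (1 - X) * d⁄dX ℤ (A a b) + C ((a + b + 1 : ℕ) : ℤ) * A a b =
      (1 - X) ^ (a + b + 2) * d⁄dX ℤ (S a b) := by
  simp only [A, Derivation.leibniz, Derivation.leibniz_pow, map_sub, Derivation.map_one_eq_zero,
    derivative_X, smul_eq_mul, nsmul_eq_mul, map_natCast]
  push_cast
  ring

theorem A_succ_left (a b : ℕ) : A (a + 1) b = eulerStep 0 (a + b + 1) (A a b) := by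
  rw [eulerStep, one_sub_X_mul_derivative_A, A, S_succ_left]
  simp only [Nat.cast_zero, map_zero, zero_mul, zero_add]
  ring

theorem A_succ_right (a b : ℕ) : A a (b + 1) = eulerStep 1 (a + b) (A a b) := by
  have key := one_sub_X_mul_derivative_A a b
  have hA : A a b = (1 - X) ^ (a + b + 1) * S a b := rfl
  have hA' : A a (b + 1) = (1 - X) ^ (a + b + 2) * (X * d⁄dX ℤ (S a b) + S a b) := by
    rw [A, S_succ_right, Derivation.leibniz, derivative_X, smul_eq_mul, smul_eq_mul, mul_one]
    ring_nf
  rw [eulerStep, hA']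
  simp only [map_natCast] at key ⊢
  push_cast at key ⊢
  linear_combination -X * key - (1 - X) * hA

theorem isLogConcaveSeq_coeff_A (a b : ℕ) : IsLogConcaveSeq (a + b) (coeff · (A a b)) := by
  induction b with
  | zero =>
    induction a with
    | zero => rw [A_zero_zero]; exact isLogConcaveSeq_coeff_one
    | succ a ih => rw [A_succ_left]; exact ih.map_eulerStep (Nat.le_succ _)
  | succ b ih => rw [A_succ_right]; exact ih.map_eulerStep le_rfl

/-- For all integers `i ≥ j ≥ -1`, the coefficient sequence of
`A(i,j,t) = (1-t)^{i+2} ∑_{n≥0} t^n n^{j+1}(n+1)^{i-j}` is unimodal. -/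
theorem A_coefficients_unimodal (i j : ℤ) (hj : -1 ≤ j) (hij : j ≤ i) :
    ∃ p : ℕ,
      (∀ a, a < p →
        PowerSeries.coeff (R := ℤ) a ((1 - PowerSeries.X) ^ (i + 2).toNat *
          PowerSeries.mk (fun n : ℕ =>
            (n : ℤ) ^ (j + 1).toNat * ((n : ℤ) + 1) ^ (i - j).toNat))
          ≤ PowerSeries.coeff (R := ℤ) (a + 1) ((1 - PowerSeries.X) ^ (i + 2).toNat *
              PowerSeries.mk (fun n : ℕ =>
                (n : ℤ) ^ (j + 1).toNat * ((n : ℤ) + 1) ^ (i - j).toNat))) ∧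
      (∀ a, p ≤ a →
        PowerSeries.coeff (R := ℤ) (a + 1) ((1 - PowerSeries.X) ^ (i + 2).toNat *
          PowerSeries.mk (fun n : ℕ =>
            (n : ℤ) ^ (j + 1).toNat * ((n : ℤ) + 1) ^ (i - j).toNat))
          ≤ PowerSeries.coeff (R := ℤ) a ((1 - PowerSeries.X) ^ (i + 2).toNat *
              PowerSeries.mk (fun n : ℕ =>
                (n : ℤ) ^ (j + 1).toNat * ((n : ℤ) + 1) ^ (i - j).toNat))) := by
  have hN : (i + 2).toNat = (j + 1).toNat + (i - j).toNat + 1 := by omega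
  rw [hN]
  exact (isLogConcaveSeq_coeff_A _ _).isUnimodal
end

section
/- The δ-vector of any lattice parallelepiped is unimodal. That is, if P = conv(v_0,...,v_r) is a simplex spanned by linearly independent lattice vectors and ◊P = {Σ λ_i v_i : 0 ≤ λ_i ≤ 1}, then the coefficients of δ(◊P, t) = (1-t)^{r+2} Σ_{n≥0} #(n◊P ∩ Z^m) t^n form a unimodal sequence. -/
/-!
Every lattice point of `n ◊P` is uniquely `y + ∑ aᵢ vᵢ` with `y` a lattice point of the half-open
parallelepiped `{∑ λᵢ vᵢ : 0 ≤ λᵢ < 1}` and `a` integral; for fixed `y` the admissible `a` form a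
box with `n + 1` choices in the coordinates where `y` has a zero coordinate and `n` in the others.
Hence `δ(◊P)` is a sum, over these `y`, of δ-vectors of cubes `[0,1)^a × [0,1]^b` with
`a + b = r + 1`. Multiplying the counting function by `n` or `n + 1` gives linear recurrences for
these δ-vectors in `a` and in `b`; from them, each one is symmetric under
`(a, b, k) ↦ (b, a, a + b - k)` and alternatingly increasing when `b ≤ a`. So every summand increases up to the middle index
`(r + 1) / 2` and decreases after it, and so does the sum.
-/

open PowerSeries
open Finset hiding mk

theorem coeff_X_mul_derivative {R : Type*} [CommSemiring R] (A : R⟦X⟧) (k : ℕ) :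
    coeff k (X * derivative R A) = k * coeff k A := by
  cases k with
  | zero => simp
  | succ k => rw [coeff_succ_X_mul, coeff_derivative, mul_comm]; push_cast; rfl

theorem derivative_one_sub_X_pow {R : Type*} [CommRing R] (n : ℕ) :
    derivative R ((1 - X) ^ (n + 1) : R⟦X⟧) = -((n + 1 : R⟦X⟧) * (1 - X) ^ n) := by
  rw [Derivation.leibniz_pow]
  simp [nsmul_eq_mul]

theorem one_sub_X_pow_mul_mk_add_mul {R : Type*} [CommRing R] (d : ℕ) (f : ℕ → R) (c : R) :
    (1 - X) ^ (d + 2) * mk (fun n => (n + c) * f n) =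
      X * derivative R ((1 - X) ^ (d + 1) * mk f)
        - X * (X * derivative R ((1 - X) ^ (d + 1) * mk f))
        + C (d + 1 - c) * (X * ((1 - X) ^ (d + 1) * mk f))
        + C c * ((1 - X) ^ (d + 1) * mk f) := by
  have hmk : mk (fun n => (n + c) * f n) = X * derivative R (mk f) + C c * mk f := by
    ext n
    rcases n with _ | n
    · simp
    · rw [map_add, coeff_succ_X_mul, coeff_derivative, coeff_C_mul]; simp; ring
  rw [hmk, Derivation.leibniz, derivative_one_sub_X_pow]
  simp only [smul_eq_mul, map_sub, map_add, map_natCast, map_one]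
  ring

/-- `numCoeff d f k` is the `k`-th coefficient of the numerator `h` in
`∑ₙ f n Xⁿ = h / (1 - X)^(d+1)`, extended by zero to negative `k`. -/
noncomputable def numCoeff (d : ℕ) (f : ℕ → ℤ) (k : ℤ) : ℤ :=
  if 0 ≤ k then coeff k.toNat ((1 - X) ^ (d + 1) * mk f) else 0

theorem numCoeff_of_neg {d : ℕ} {f : ℕ → ℤ} {k : ℤ} (hk : k < 0) : numCoeff d f k = 0 :=
  if_neg hk.not_ge

theorem numCoeff_natCast (d : ℕ) (f : ℕ → ℤ) (k : ℕ) :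
    numCoeff d f k = coeff k ((1 - X) ^ (d + 1) * mk f) := by
  simp [numCoeff]

theorem numCoeff_succ (d : ℕ) (f : ℕ → ℤ) (c k : ℤ) :
    numCoeff (d + 1) (fun n => (n + c) * f n) k =
      (k + c) * numCoeff d f k + (d + 2 - c - k) * numCoeff d f (k - 1) := by
  rcases lt_or_ge k 0 with hk | hk
  · simp [numCoeff_of_neg hk, numCoeff_of_neg (show k - 1 < 0 by omega)]
  obtain ⟨k, rfl⟩ := Int.eq_ofNat_of_zero_le hk
  rw [numCoeff_natCast, numCoeff_natCast, one_sub_X_pow_mul_mk_add_mul]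
  rcases k with _ | k
  · rw [numCoeff_of_neg (by omega)]
    simp
  · rw [show ((k + 1 : ℕ) : ℤ) - 1 = k by push_cast; ring, numCoeff_natCast, map_add, map_add,
      map_sub, coeff_C_mul, coeff_C_mul, coeff_X_mul_derivative,
      coeff_succ_X_mul, coeff_X_mul_derivative, coeff_succ_X_mul]
    push_cast
    ring

/-- The δ-vector of the half-open cube `[0,1)^a × [0,1]^b`, whose `n`-th dilate has
`n^a (n+1)^b` lattice points. -/
noncomputable def cubeDelta (a b : ℕ) : ℤ → ℤ :=
  numCoeff (a + b) fun n => (n : ℤ) ^ a * ((n : ℤ) + 1) ^ b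

theorem cubeDelta_of_neg {a b : ℕ} {k : ℤ} (hk : k < 0) : cubeDelta a b k = 0 :=
  numCoeff_of_neg hk

theorem cubeDelta_zero_zero (k : ℤ) : cubeDelta 0 0 k = if k = 0 then 1 else 0 := by
  rcases lt_or_ge k 0 with hk | hk
  · rw [cubeDelta_of_neg hk, if_neg hk.ne]
  obtain ⟨k, rfl⟩ := Int.eq_ofNat_of_zero_le hk
  have h : (1 - X) ^ (0 + 0 + 1) * mk (fun n : ℕ => (n : ℤ) ^ 0 * ((n : ℤ) + 1) ^ 0) = 1 := by
    simpa [mul_comm, Pi.one_def] using mk_one_mul_one_sub_eq_one (S := ℤ)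
  rw [cubeDelta, numCoeff_natCast, h, coeff_one]
  simp

theorem cubeDelta_succ_left (a b : ℕ) (k : ℤ) :
    cubeDelta (a + 1) b k = k * cubeDelta a b k + (a + b + 2 - k) * cubeDelta a b (k - 1) := by
  have h : cubeDelta (a + 1) b =
      numCoeff (a + b + 1) fun n => ((n : ℤ) + 0) * ((n : ℤ) ^ a * ((n : ℤ) + 1) ^ b) := by
    rw [cubeDelta, show a + 1 + b = a + b + 1 by omega]
    congr! 2 with n
    ring
  rw [h, numCoeff_succ, cubeDelta]
  push_cast
  ring

theorem cubeDelta_succ_right (a b : ℕ) (k : ℤ) :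
    cubeDelta a (b + 1) k =
      (k + 1) * cubeDelta a b k + (a + b + 1 - k) * cubeDelta a b (k - 1) := by
  have h : cubeDelta a (b + 1) =
      numCoeff (a + b + 1) fun n => ((n : ℤ) + 1) * ((n : ℤ) ^ a * ((n : ℤ) + 1) ^ b) := by
    rw [cubeDelta, ← add_assoc]
    congr! 2 with n
    ring
  rw [h, numCoeff_succ, cubeDelta]
  push_cast
  ring

theorem cubeDelta_eq_zero_of_lt {a b : ℕ} {k : ℤ} (hk : a + b < k) : cubeDelta a b k = 0 := by
  induction a generalizing k with
  | zero =>
    induction b generalizing k with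
    | zero => simp [cubeDelta_zero_zero]; omega
    | succ b ih =>
      rw [cubeDelta_succ_right, ih (by push_cast at hk ⊢; omega), ih (by push_cast at hk ⊢; omega)]
      ring
  | succ a ih =>
    rw [cubeDelta_succ_left, ih (by push_cast at hk ⊢; omega), ih (by push_cast at hk ⊢; omega)]
    ring

theorem cubeDelta_nonneg (a b : ℕ) (k : ℤ) : 0 ≤ cubeDelta a b k := by
  rcases lt_or_ge k 0 with hk | hk
  · rw [cubeDelta_of_neg hk]
  induction a generalizing k with
  | zero =>
    induction b generalizing k with
    | zero => rw [cubeDelta_zero_zero]; split_ifs <;> norm_num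
    | succ b ih =>
      rw [cubeDelta_succ_right]
      rcases eq_or_lt_of_le hk with rfl | hk
      · simpa [cubeDelta_of_neg] using ih 0 le_rfl
      rcases le_or_gt k (b + 1) with hkb | hkb
      · exact add_nonneg (mul_nonneg (by omega) (ih k hk.le))
          (mul_nonneg (by push_cast; omega) (ih (k - 1) (by omega)))
      · rw [cubeDelta_eq_zero_of_lt (k := k - 1) (by push_cast; omega)]
        simpa using mul_nonneg (by omega) (ih k hk.le)
  | succ a ih =>
    rw [cubeDelta_succ_left]
    rcases eq_or_lt_of_le hk with rfl | hk
    · simp [cubeDelta_of_neg]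
    rcases le_or_gt k (a + b + 2) with hkb | hkb
    · exact add_nonneg (mul_nonneg hk.le (ih k hk.le))
        (mul_nonneg (by omega) (ih (k - 1) (by omega)))
    · rw [cubeDelta_eq_zero_of_lt (k := k - 1) (by omega)]
      simpa using mul_nonneg hk.le (ih k hk.le)

theorem cubeDelta_symm (a b : ℕ) (k : ℤ) : cubeDelta a b k = cubeDelta b a (a + b - k) := by
  induction a generalizing b k with
  | zero =>
    induction b generalizing k with
    | zero => simp [cubeDelta_zero_zero]
    | succ b ih =>
      rw [cubeDelta_succ_right, cubeDelta_succ_left, ih, ih]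
      push_cast
      ring_nf
  | succ a ih =>
    rw [cubeDelta_succ_left, cubeDelta_succ_right, ih, ih]
    push_cast
    ring_nf

/-- `w` is alternatingly increasing of degree `d`: `w 0 ≤ w d ≤ w 1 ≤ w (d - 1) ≤ w 2 ≤ ⋯`.
The conditions at negative indices hold for nonnegative `w` supported on `[0, d]`. -/
def IsAltIncreasing (w : ℤ → ℤ) (d : ℤ) : Prop :=
  (∀ k j, k ≤ j → k + j = d → w k ≤ w j) ∧ (∀ k j, k ≤ j → k + j = d + 1 → w j ≤ w k)

namespace IsAltIncreasing

variable {w : ℤ → ℤ} {d : ℤ}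

theorem le_succ (h : IsAltIncreasing w d) {k : ℤ} (hk : 2 * k + 1 ≤ d) : w k ≤ w (k + 1) :=
  (h.1 k (d - k) (by omega) (by omega)).trans (h.2 (k + 1) (d - k) (by omega) (by omega))

theorem succ_le (h : IsAltIncreasing w d) {k : ℤ} (hk : d ≤ 2 * k) : w (k + 1) ≤ w k :=
  (h.2 (d - k) (k + 1) (by omega) (by omega)).trans (h.1 (d - k) k (by omega) (by omega))

end IsAltIncreasing

theorem isAltIncreasing_cubeDelta_zero_zero : IsAltIncreasing (cubeDelta 0 0) 0 := by
  refine ⟨fun k j hkj hsum => ?_, fun k j hkj hsum => ?_⟩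
  · rcases lt_or_ge k 0 with hk | hk
    · rw [cubeDelta_of_neg hk]
      exact cubeDelta_nonneg 0 0 j
    · obtain rfl : k = j := by omega
      rfl
  · rw [cubeDelta_eq_zero_of_lt (by push_cast; omega)]
    exact cubeDelta_nonneg 0 0 k

theorem isAltIncreasing_cubeDelta_succ_left {a b : ℕ}
    (h : IsAltIncreasing (cubeDelta a b) (a + b : ℕ)) :
    IsAltIncreasing (cubeDelta (a + 1) b) (a + 1 + b : ℕ) := by
  push_cast at h ⊢
  refine ⟨fun k j hkj hsum => ?_, fun k j hkj hsum => ?_⟩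
  · rcases lt_or_ge k 0 with hk | hk
    · rw [cubeDelta_of_neg hk]
      exact cubeDelta_nonneg _ _ j
    rcases eq_or_lt_of_le hkj with rfl | hkj
    · rfl
    have h1 := h.1 k (j - 1) (by omega) (by omega)
    have h2 := h.1 (k - 1) j (by omega) (by omega)
    have h3 : cubeDelta a b j ≤ cubeDelta a b (j - 1) := by
      simpa using h.succ_le (k := j - 1) (by omega)
    rw [cubeDelta_succ_left, cubeDelta_succ_left, show (a : ℤ) + b + 2 - k = j + 1 by omega,
      show (a : ℤ) + b + 2 - j = k + 1 by omega]
    linarith [mul_le_mul_of_nonneg_left h1 hk,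
      mul_le_mul_of_nonneg_left h2 (by omega : (0 : ℤ) ≤ j + 1)]
  · rcases lt_or_ge k 0 with hk | hk
    · rw [cubeDelta_eq_zero_of_lt (by push_cast; omega)]
      exact cubeDelta_nonneg _ _ k
    rcases eq_or_lt_of_le hkj with rfl | hkj
    · rfl
    have h1 := h.2 k (j - 1) (by omega) (by omega)
    have h2 := h.2 (k - 1) j (by omega) (by omega)
    rw [cubeDelta_succ_left, cubeDelta_succ_left, show (a : ℤ) + b + 2 - k = j by omega,
      show (a : ℤ) + b + 2 - j = k by omega]
    linarith [mul_le_mul_of_nonneg_left h1 hk,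
      mul_le_mul_of_nonneg_left h2 (by omega : (0 : ℤ) ≤ j)]

/-- On the diagonal the first half of the conditions is `cubeDelta_symm`; the recurrence in `b`
alone does not preserve it. -/
theorem isAltIncreasing_cubeDelta_diag {a : ℕ}
    (h : IsAltIncreasing (cubeDelta (a + 1) a) (a + 1 + a : ℕ)) :
    IsAltIncreasing (cubeDelta (a + 1) (a + 1)) (a + 1 + (a + 1) : ℕ) := by
  push_cast at h ⊢
  refine ⟨fun k j hkj hsum => le_of_eq ?_, fun k j hkj hsum => ?_⟩
  · rw [cubeDelta_symm]
    congr 1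
    push_cast
    omega
  · rcases le_or_gt k 0 with hk | hk
    · rw [cubeDelta_eq_zero_of_lt (by push_cast; omega)]
      exact cubeDelta_nonneg _ _ k
    rcases eq_or_lt_of_le hkj with rfl | hkj
    · rfl
    have h1 := h.2 k (j - 1) (by omega) (by omega)
    have h2 := h.2 (k - 1) j (by omega) (by omega)
    have h3 : cubeDelta (a + 1) a (k - 1) ≤ cubeDelta (a + 1) a k := by
      simpa using h.le_succ (k := k - 1) (by omega)
    rw [cubeDelta_succ_right, cubeDelta_succ_right]
    push_cast
    rw [show (a : ℤ) + 1 + a + 1 - k = j - 1 by omega,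
      show (a : ℤ) + 1 + a + 1 - j = k - 1 by omega]
    linarith [mul_le_mul_of_nonneg_left h1 (by omega : (0 : ℤ) ≤ k - 1),
      mul_le_mul_of_nonneg_left h2 (by omega : (0 : ℤ) ≤ j + 1)]

theorem isAltIncreasing_cubeDelta {a b : ℕ} (hba : b ≤ a) :
    IsAltIncreasing (cubeDelta a b) (a + b : ℕ) := by
  induction b generalizing a with
  | zero =>
    induction a with
    | zero => exact isAltIncreasing_cubeDelta_zero_zero
    | succ a ih => exact isAltIncreasing_cubeDelta_succ_left (ih a.zero_le)
  | succ b ih =>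
    induction a, hba using Nat.le_induction with
    | base => exact isAltIncreasing_cubeDelta_diag (ih b.le_succ)
    | succ a _ iha => exact isAltIncreasing_cubeDelta_succ_left iha

theorem cubeDelta_le_succ {a b : ℕ} {k : ℤ} (hk : 2 * k + 2 ≤ a + b) :
    cubeDelta a b k ≤ cubeDelta a b (k + 1) := by
  rcases le_or_gt b a with hba | hab
  · exact (isAltIncreasing_cubeDelta hba).le_succ (by push_cast; omega)
  · rw [cubeDelta_symm a b k, cubeDelta_symm a b (k + 1)]
    have := (isAltIncreasing_cubeDelta hab.le).succ_le (k := a + b - k - 1) (by push_cast; omega)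
    rwa [sub_add_cancel, sub_sub] at this

theorem cubeDelta_succ_le {a b : ℕ} {k : ℤ} (hk : a + b ≤ 2 * k) :
    cubeDelta a b (k + 1) ≤ cubeDelta a b k := by
  rcases le_or_gt b a with hba | hab
  · exact (isAltIncreasing_cubeDelta hba).succ_le (by push_cast; omega)
  · rw [cubeDelta_symm a b k, cubeDelta_symm a b (k + 1)]
    have := (isAltIncreasing_cubeDelta hab.le).le_succ (k := a + b - k - 1) (by push_cast; omega)
    rwa [sub_add_cancel, sub_sub] at this

theorem mem_Icc_ite_iff {t : ℝ} (ht₀ : 0 ≤ t) (ht₁ : t < 1) (n : ℕ) (a : ℤ) :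
    a ∈ Icc 0 (if t = 0 then (n : ℤ) else n - 1) ↔ 0 ≤ t + a ∧ t + a ≤ n := by
  rw [Finset.mem_Icc]
  split_ifs with ht
  · subst ht
    simp only [zero_add]
    exact_mod_cast Iff.rfl
  have ht₀ : 0 < t := lt_of_le_of_ne ht₀ (Ne.symm ht)
  constructor
  · rintro ⟨h₀, h₁⟩
    have h₁ : (a : ℝ) ≤ n - 1 := by exact_mod_cast h₁
    exact ⟨by positivity, by linarith⟩
  · rintro ⟨h₀, h₁⟩
    have h₀ : (-1 : ℤ) < a := by exact_mod_cast (by linarith : (-1 : ℝ) < a)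
    have h₁ : a < n := by exact_mod_cast (by linarith : (a : ℝ) < n)
    omega

section ShiftBox

variable {ι : Type*} [Fintype ι] [DecidableEq ι]

noncomputable def shiftBox (t : ι → ℝ) (n : ℕ) : Finset (ι → ℤ) :=
  Fintype.piFinset fun i => Icc 0 (if t i = 0 then (n : ℤ) else n - 1)

theorem mem_shiftBox_iff {t : ι → ℝ} (ht : ∀ i, 0 ≤ t i ∧ t i < 1) {n : ℕ} {a : ι → ℤ} :
    a ∈ shiftBox t n ↔ ∀ i, 0 ≤ t i + a i ∧ t i + a i ≤ n := by
  simp only [shiftBox, Fintype.mem_piFinset, mem_Icc_ite_iff (ht _).1 (ht _).2]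

theorem card_shiftBox (t : ι → ℝ) (n : ℕ) :
    #(shiftBox t n) = n ^ #{i | t i ≠ 0} * (n + 1) ^ #{i | t i = 0} := by
  have hcard (i : ι) :
      #(Icc 0 (if t i = 0 then (n : ℤ) else n - 1)) = if t i = 0 then n + 1 else n := by
    split_ifs <;> simp
  rw [shiftBox, Fintype.card_piFinset, prod_congr rfl fun i _ => hcard i, prod_ite, prod_const,
    prod_const, mul_comm]

end ShiftBox

section Parallelepiped

variable {ι κ : Type*} [Fintype ι] (v : ι → κ → ℤ)

def IsCoords (x : κ → ℤ) (lam : ι → ℝ) : Prop :=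
  ∀ j, (x j : ℝ) = ∑ i, lam i * (v i j : ℝ)

def latticePoints (n : ℕ) : Set (κ → ℤ) :=
  {x | ∃ lam : ι → ℝ, (∀ i, 0 ≤ lam i ∧ lam i ≤ n) ∧ IsCoords v x lam}

def fundamentalPoints : Set (κ → ℤ) :=
  {y | ∃ lam : ι → ℝ, (∀ i, 0 ≤ lam i ∧ lam i < 1) ∧ IsCoords v y lam}

/-- Arbitrary when `x` is not in the real span of `v`. -/
noncomputable def coords (x : κ → ℤ) : ι → ℝ :=
  Classical.epsilon (IsCoords v x)

def shift (x : κ → ℤ) (a : ι → ℤ) : κ → ℤ :=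
  fun j => x j + ∑ i, a i * v i j

noncomputable def fundamentalRep (x : κ → ℤ) : κ → ℤ :=
  shift v x fun i => -⌊coords v x i⌋

theorem finite_fundamentalPoints [Finite κ] : (fundamentalPoints v).Finite := by
  let comb : (ι → ℝ) → κ → ℝ := fun lam j => ∑ i, lam i * (v i j : ℝ)
  have hK : IsCompact (comb '' Set.Icc 0 1) := isCompact_Icc.image (by fun_prop)
  have hemb : Topology.IsClosedEmbedding (Pi.map fun _ : κ => ((↑) : ℤ → ℝ)) :=
    .piMap fun _ => Int.isClosedEmbedding_coe_real
  refine (hemb.isCompact_preimage hK).finite_of_discrete.subset ?_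
  rintro y ⟨lam, hlam, hy⟩
  exact ⟨lam, ⟨fun i => (hlam i).1, fun i => (hlam i).2.le⟩, funext fun j => (hy j).symm⟩

theorem card_coords_ne_zero_add_card_coords_eq_zero (y : κ → ℤ) :
    #{i | coords v y i ≠ 0} + #{i | coords v y i = 0} = Fintype.card ι := by
  rw [add_comm, card_filter_add_card_filter_not, card_univ]

theorem shift_fundamentalRep (x : κ → ℤ) :
    shift v (fundamentalRep v x) (fun i => ⌊coords v x i⌋) = x := by
  funext j
  simp [shift, fundamentalRep]

variable {v} {x : κ → ℤ} {lam lam' : ι → ℝ}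

theorem IsCoords.shift (h : IsCoords v x lam) (a : ι → ℤ) :
    IsCoords v (shift v x a) (fun i => lam i + a i) := by
  intro j
  simp only [_root_.shift, Int.cast_add, Int.cast_sum, Int.cast_mul, h j, add_mul, sum_add_distrib]

variable (hv : LinearIndependent ℝ fun i j => (v i j : ℝ))
include hv

theorem IsCoords.unique (h : IsCoords v x lam) (h' : IsCoords v x lam') : lam = lam' := by
  have := Fintype.linearIndependent_iff.mp hv (lam - lam') <| funext fun j => by
    simp [Finset.sum_apply, sub_mul, sum_sub_distrib, ← h j, ← h' j]
  exact funext fun i => sub_eq_zero.mp (this i)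

theorem IsCoords.coords_eq (h : IsCoords v x lam) : coords v x = lam :=
  (Classical.epsilon_spec ⟨lam, h⟩).unique hv h

theorem shift_injective (h : IsCoords v x lam) : Function.Injective (shift v x) :=
  fun a a' haa' => funext fun i => by
    have := congrFun ((h.shift a).unique hv (haa' ▸ h.shift a')) i
    exact_mod_cast add_left_cancel this

theorem fundamentalRep_mem (h : IsCoords v x lam) : fundamentalRep v x ∈ fundamentalPoints v := by
  refine ⟨fun i => lam i + ((-⌊coords v x i⌋ : ℤ) : ℝ), fun i => ?_, h.shift _⟩
  dsimp only
  rw [h.coords_eq hv, Int.cast_neg, ← sub_eq_add_neg]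
  exact ⟨Int.fract_nonneg _, Int.fract_lt_one _⟩

theorem fundamentalRep_shift {y : κ → ℤ} (hy : y ∈ fundamentalPoints v) (a : ι → ℤ) :
    fundamentalRep v (shift v y a) = y := by
  obtain ⟨t, ht, hyt⟩ := hy
  have hfloor (i : ι) : ⌊coords v (shift v y a) i⌋ = a i := by
    rw [(hyt.shift a).coords_eq hv, Int.floor_add_intCast, Int.floor_eq_zero_iff.mpr (ht i),
      zero_add]
  funext j
  simp [fundamentalRep, shift, hfloor]

theorem shift_mem_latticePoints_iff [DecidableEq ι] {y : κ → ℤ} (hy : y ∈ fundamentalPoints v)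
    {n : ℕ} {a : ι → ℤ} : shift v y a ∈ latticePoints v n ↔ a ∈ shiftBox (coords v y) n := by
  obtain ⟨t, ht, hyt⟩ := hy
  rw [hyt.coords_eq hv, mem_shiftBox_iff ht]
  constructor
  · rintro ⟨lam, hlam, hx⟩
    obtain rfl := (hyt.shift a).unique hv hx
    exact hlam
  · exact fun h => ⟨_, h, hyt.shift a⟩

theorem ncard_latticePoints [Finite κ] (n : ℕ) :
    (latticePoints v n).ncard = ∑ y ∈ (finite_fundamentalPoints v).toFinset,
      n ^ #{i | coords v y i ≠ 0} * (n + 1) ^ #{i | coords v y i = 0} := by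
  classical
  have hunion : latticePoints v n = ↑((finite_fundamentalPoints v).toFinset.biUnion
      fun y => (shiftBox (coords v y) n).image (shift v y)) := by
    ext x
    simp only [coe_biUnion, mem_coe, Set.Finite.mem_toFinset, coe_image, Set.mem_iUnion,
      Set.mem_image, exists_prop]
    constructor
    · intro hx
      have hrep := fundamentalRep_mem hv hx.choose_spec.2
      refine ⟨_, hrep, _, (shift_mem_latticePoints_iff hv hrep).mp ?_, shift_fundamentalRep v x⟩
      rwa [shift_fundamentalRep]
    · rintro ⟨y, hy, a, ha, rfl⟩
      exact (shift_mem_latticePoints_iff hv hy).mpr ha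
  rw [hunion, Set.ncard_coe_finset, card_biUnion]
  · refine sum_congr rfl fun y hy => ?_
    obtain ⟨t, -, hyt⟩ := (Set.Finite.mem_toFinset _).mp hy
    rw [card_image_of_injective _ (shift_injective hv hyt), card_shiftBox]
  · intro y hy y' hy' hne
    rw [mem_coe, Set.Finite.mem_toFinset] at hy hy'
    simp only [Function.onFun, disjoint_left, mem_image]
    rintro _ ⟨a, -, rfl⟩ ⟨a', -, h⟩
    exact hne (by rw [← fundamentalRep_shift hv hy a, ← h, fundamentalRep_shift hv hy'])

theorem coeff_one_sub_X_pow_mul_mk_ncard_latticePoints [Finite κ] (c : ℕ) :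
    coeff c ((1 - X) ^ (Fintype.card ι + 1) * mk fun n => ((latticePoints v n).ncard : ℤ)) =
      ∑ y ∈ (finite_fundamentalPoints v).toFinset,
        cubeDelta #{i | coords v y i ≠ 0} #{i | coords v y i = 0} c := by
  have hmk : (mk fun n => ((latticePoints v n).ncard : ℤ)) =
      ∑ y ∈ (finite_fundamentalPoints v).toFinset, mk fun n =>
        (n : ℤ) ^ #{i | coords v y i ≠ 0} * ((n : ℤ) + 1) ^ #{i | coords v y i = 0} := by
    ext n
    simp [map_sum, ncard_latticePoints hv]
  rw [hmk, mul_sum, map_sum]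
  refine sum_congr rfl fun y _ => ?_
  rw [cubeDelta, numCoeff_natCast, card_coords_ne_zero_add_card_coords_eq_zero]

end Parallelepiped

theorem exists_unimodal_of_le_succ_of_succ_le {α : Type*} [LinearOrder α] {D : ℕ → α} (d : ℕ)
    (hinc : ∀ k, 2 * k + 2 ≤ d → D k ≤ D (k + 1)) (hdec : ∀ k, d ≤ 2 * k → D (k + 1) ≤ D k) :
    ∃ p, (∀ a, a < p → D a ≤ D (a + 1)) ∧ ∀ a, p ≤ a → D (a + 1) ≤ D a := by
  by_cases hmid : D (d / 2) ≤ D (d / 2 + 1)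
  · refine ⟨d / 2 + 1, fun a ha => ?_, fun a ha => hdec a (by omega)⟩
    rcases Nat.lt_or_ge a (d / 2) with h | h
    · exact hinc a (by omega)
    · obtain rfl : a = d / 2 := by omega
      exact hmid
  · refine ⟨d / 2, fun a ha => hinc a (by omega), fun a ha => ?_⟩
    rcases eq_or_lt_of_le ha with rfl | h
    · exact (not_le.mp hmid).le
    · exact hdec a (by omega)

/-- The δ-vector of a lattice parallelepiped is unimodal: if
`◊P = {∑ λ_i v_i : 0 ≤ λ_i ≤ 1}` is the parallelepiped spanned by linearly
independent lattice vectors `v_0,…,v_r` in `ℤ^m`, then the coefficients of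
`δ(◊P,t) = (1-t)^{r+2} ∑_{n≥0} #(n◊P ∩ ℤ^m) t^n` form a unimodal sequence. -/
theorem delta_parallelepiped_unimodal (m r : ℕ)
    (v : Fin (r + 1) → Fin m → ℤ)
    (hv : LinearIndependent ℝ (fun i => fun j => (v i j : ℝ))) :
    ∀ D : ℕ → ℤ,
      (∀ c : ℕ,
        D c = PowerSeries.coeff (R := ℤ) c ((1 - PowerSeries.X) ^ (r + 2) *
          PowerSeries.mk (fun n : ℕ =>
            (Set.ncard {x : Fin m → ℤ | ∃ lam : Fin (r + 1) → ℝ,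
              (∀ i, 0 ≤ lam i ∧ lam i ≤ (n : ℝ)) ∧
              ∀ j, (x j : ℝ) = ∑ i, lam i * (v i j : ℝ)} : ℤ)))) →
      ∃ p : ℕ, (∀ a, a < p → D a ≤ D (a + 1)) ∧ (∀ a, p ≤ a → D (a + 1) ≤ D a) := by
  intro D hD
  have hsum (c : ℕ) : D c = ∑ y ∈ (finite_fundamentalPoints v).toFinset,
      cubeDelta #{i | coords v y i ≠ 0} #{i | coords v y i = 0} c := by
    rw [hD c, ← coeff_one_sub_X_pow_mul_mk_ncard_latticePoints hv, Fintype.card_fin]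
    rfl
  have hdim (y : Fin m → ℤ) : (#{i | coords v y i ≠ 0} + #{i | coords v y i = 0} : ℤ) = r + 1 := by
    rw [← Nat.cast_add, card_coords_ne_zero_add_card_coords_eq_zero, Fintype.card_fin,
      Nat.cast_succ]
  refine exists_unimodal_of_le_succ_of_succ_le (r + 1) (fun k hk => ?_) (fun k hk => ?_)
  · rw [hsum, hsum]
    push_cast
    exact sum_le_sum fun y _ => cubeDelta_le_succ (by rw [hdim]; omega)
  · rw [hsum, hsum]
    push_cast
    exact sum_le_sum fun y _ => cubeDelta_succ_le (by rw [hdim]; omega)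
end
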